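/- arXiv:2312.14514 — 9 statements merged into one kernel-verified Lean document; each statement's English description precedes it below -/
import Mathlib

section
/- Let A and B be alphabets with |A| ≥ 3 and let f be a square-free L-uniform morphism from A* to B*. Then f is a 3-anti-power morphism if and only if f is a 3-anti-power morphism up to 5 (i.e., f(w) is a 3-anti-power word for every 3-anti-power word w over A of length at most 5). -/
/-- A word `u` contains a square `xx` (x nonempty) iff it is not square-free. -/
def SquareFree {B : Type*} (w : List B) : Prop :=
  ∀ u : List B, u ≠ [] → ¬ (u ++ u) <:+: w

/-- `w` is a (k,n)-anti-power sequence: a concatenation of `k` pairwise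
distinct words, each of length `n`. -/
def AntiPowerSeq {B : Type*} (k n : ℕ) (w : List B) : Prop :=
  ∃ l : List (List B), l.length = k ∧ (∀ u ∈ l, u.length = n) ∧
    l.Pairwise (· ≠ ·) ∧ w = l.flatten

/-- `AntiPowerWord k w`: a 2-anti-power word is a square-free word; for `k ≥ 3`,
a `k`-anti-power word is a `(k-1)`-anti-power word each of whose factors of
length `k·ℓ` (for `1 ≤ ℓ ≤ ⌊|w|/k⌋`) is a `(k,ℓ)`-anti-power sequence. -/
def AntiPowerWord {B : Type*} : ℕ → List B → Prop
  | 0, _ => True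
  | 1, _ => True
  | 2, w => SquareFree w
  | k + 3, w => AntiPowerWord (k + 2) w ∧
      ∀ ℓ : ℕ, 1 ≤ ℓ → ℓ ≤ w.length / (k + 3) →
        ∀ u : List B, u <:+: w → u.length = (k + 3) * ℓ → AntiPowerSeq (k + 3) ℓ u

/-- The action on words of the morphism `f : A* → B*` determined by its
values on letters. -/
def Morph.apply {A B : Type*} (f : A → List B) (w : List A) : List B :=
  (w.map f).flatten

namespace APAux

variable {A B : Type*}

lemma AP3_def {w : List B} : AntiPowerWord 3 w ↔ (SquareFree w ∧
      ∀ ℓ : ℕ, 1 ≤ ℓ → ℓ ≤ w.length / 3 →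
        ∀ u : List B, u <:+: w → u.length = 3 * ℓ → AntiPowerSeq 3 ℓ u) := Iff.rfl

lemma infix_drop_take (l : List B) (a b : ℕ) : (l.drop a).take b <:+: l :=
  ⟨l.take a, (l.drop a).drop b, by rw [List.append_assoc, List.take_append_drop, List.take_append_drop]⟩

lemma occ_seg {F x : List B} {P ℓ : ℕ} (hocc : (F.drop P).take ℓ = x) (d c : ℕ)
    (h : d + c ≤ ℓ) : (F.drop (P + d)).take c = (x.drop d).take c := by
  rw [← hocc, List.drop_take, List.drop_drop, List.take_take, min_eq_left (by omega)]

lemma apply_cons (f : A → List B) (a : A) (w : List A) :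
    Morph.apply f (a :: w) = f a ++ Morph.apply f w := by simp [Morph.apply]

lemma apply_append (f : A → List B) (v w : List A) :
    Morph.apply f (v ++ w) = Morph.apply f v ++ Morph.apply f w := by simp [Morph.apply]

variable {f : A → List B} {L : ℕ}

lemma apply_length (huni : ∀ a, (f a).length = L) (w : List A) :
    (Morph.apply f w).length = w.length * L := by
  induction w with
  | nil => simp [Morph.apply]
  | cons a w ih => rw [apply_cons]; simp [ih, huni a, Nat.succ_mul]; omega

lemma apply_drop (huni : ∀ a, (f a).length = L) (w : List A) (q : ℕ) :
    Morph.apply f (w.drop q) = (Morph.apply f w).drop (q * L) := by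
  induction q generalizing w with
  | zero => simp
  | succ q ih =>
    cases w with
    | nil => simp [Morph.apply]
    | cons a w =>
      rw [List.drop_succ_cons, ih w, apply_cons, show (q+1)*L = L + q*L by ring,
        ← List.drop_drop, List.drop_left' (huni a)]

lemma seg_block (huni : ∀ a, (f a).length = L) (w : List A) (q : ℕ) (hq : q < w.length) :
    ((Morph.apply f w).drop (q * L)).take L = f (w[q]) := by
  rw [← apply_drop huni, List.drop_eq_getElem_cons hq, apply_cons, List.take_left' (huni _)]

lemma sq2 {a b : A} (h : a ≠ b) : SquareFree [a, b] := by
  rintro u hne ⟨s, t, heq⟩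
  have h1 : 1 ≤ u.length := List.length_pos_iff.mpr hne
  have h2 := congrArg List.length heq
  simp at h2
  have hu1 : u.length = 1 := by omega
  obtain ⟨z, rfl⟩ := List.length_eq_one_iff.mp hu1
  have hs : s = [] := List.length_eq_zero_iff.mp (by omega)
  have ht : t = [] := List.length_eq_zero_iff.mp (by omega)
  subst hs; subst ht
  simp at heq
  exact h (heq.1.symm.trans heq.2)

lemma sq3 {a b c : A} (hab : a ≠ b) (hbc : b ≠ c) : SquareFree [a, b, c] := by
  rintro u hne ⟨s, t, heq⟩
  have h1 : 1 ≤ u.length := List.length_pos_iff.mpr hne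
  have h2 := congrArg List.length heq
  simp at h2
  have hu1 : u.length = 1 := by omega
  obtain ⟨z, rfl⟩ := List.length_eq_one_iff.mp hu1
  have hs : s.length ≤ 1 := by omega
  match s, hs with
  | [], _ => simp at heq; exact hab (heq.1.symm.trans heq.2.1)
  | [s1], _ => simp at heq; exact hbc (heq.2.1.symm.trans heq.2.2.1)

lemma adj_ne {w : List A} (hsq : SquareFree w) {q : ℕ} (h : q + 1 < w.length) :
    w[q] ≠ w[q+1] := by
  intro he
  apply hsq [w[q]] (by simp)
  refine ⟨w.take q, w.drop (q+2), ?_⟩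
  conv_rhs => rw [← List.take_append_drop q w]
  rw [List.drop_eq_getElem_cons (show q < w.length by omega), List.drop_eq_getElem_cons h]
  simp [he]

lemma apply_inj (hL : 1 ≤ L) (huni : ∀ a, (f a).length = L)
    (hsf : ∀ v : List A, SquareFree v → SquareFree (Morph.apply f v))
    {a b : A} (h : f a = f b) : a = b := by
  by_contra hne
  refine hsf _ (sq2 hne) (f a) ?_ ⟨[], [], ?_⟩
  · intro h0
    have := huni a
    rw [h0] at this
    simp at this
    omega
  · simp [Morph.apply, ← h]


lemma sync (hL : 1 ≤ L) (huni : ∀ a, (f a).length = L)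
    (hsf : ∀ v : List A, SquareFree v → SquareFree (Morph.apply f v))
    {w : List A} (hwsq : SquareFree w) (c : A) (t : ℕ)
    (ht : t + L ≤ w.length * L)
    (hocc : ((Morph.apply f w).drop t).take L = f c) : t % L = 0 := by
  set F := Morph.apply f w with hF
  by_contra hr0
  obtain ⟨q, r, htql, hrL, h1r⟩ : ∃ q r, t = q * L + r ∧ r < L ∧ 1 ≤ r := by
    refine ⟨t / L, t % L, ?_, Nat.mod_lt _ (by omega), by omega⟩
    rw [Nat.mul_comm]
    exact (Nat.div_add_mod t L).symm
  have hq1 : q + 1 < w.length := by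
    by_contra hc
    push_neg at hc
    have h2 : w.length * L ≤ (q + 1) * L := Nat.mul_le_mul_right _ hc
    rw [Nat.succ_mul] at h2
    omega
  have hqn : q < w.length := by omega
  have hsegb : ((F.drop (q*L)).take L) = f (w[q]) := seg_block huni w q hqn
  have hsegc' : ((F.drop ((q+1)*L)).take L) = f (w[q+1]) := seg_block huni w (q+1) hq1
  set b := w[q] with hbdef
  set c' := w[q+1] with hc'def
  have hbc' : b ≠ c' := adj_ne hwsq hq1
  have hfb_drop : (f b).drop r = (F.drop t).take (L - r) := by
    rw [← hsegb, List.drop_take, List.drop_drop, htql]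
  have hfc'_take : (f c').take r = (F.drop ((q+1)*L)).take r := by
    rw [← hsegc', List.take_take, min_eq_left (le_of_lt hrL)]
  have heq : f c = (f b).drop r ++ (f c').take r := by
    rw [← hocc, hfb_drop, hfc'_take]
    conv_lhs => rw [show L = (L - r) + r by omega]
    rw [List.take_add, List.drop_drop,
      show t + (L - r) = (q+1)*L by rw [Nat.succ_mul]; omega]
  have hzb : (f b).drop r ≠ [] := by
    intro h0
    have h0' := congrArg List.length h0
    rw [List.length_drop, huni b] at h0'
    simp at h0'
    omega
  by_cases hcb : c = b
  · -- f b = (f b).drop r ++ (f c').take r ; square z = (f b).take r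
    rw [hcb] at heq
    set z := (f b).take r with hz
    have hzne : z ≠ [] := by
      intro h0
      have h0' := congrArg List.length h0
      rw [List.length_take, huni b] at h0'
      simp at h0'
      omega
    apply hsf _ (sq2 hbc') z hzne
    refine ⟨[], (f b).drop r ++ (f c').drop r, ?_⟩
    have happ : Morph.apply f [b, c'] = f b ++ f c' := by simp [Morph.apply]
    rw [happ]
    calc ([] : List B) ++ (z ++ z) ++ ((f b).drop r ++ (f c').drop r)
        = z ++ ((z ++ (f b).drop r) ++ (f c').drop r) := by simp only [List.append_assoc, List.nil_append]
      _ = z ++ (f b ++ (f c').drop r) := by rw [List.take_append_drop]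
      _ = z ++ (((f b).drop r ++ (f c').take r) ++ (f c').drop r) := by rw [← heq]
      _ = (z ++ (f b).drop r) ++ ((f c').take r ++ (f c').drop r) := by simp only [List.append_assoc, List.nil_append]
      _ = f b ++ f c' := by rw [List.take_append_drop, List.take_append_drop]
  · by_cases hcc : c = c'
    · -- f c' = (f b).drop r ++ (f c').take r ; square z = (f b).drop r
      rw [hcc] at heq
      set z := (f b).drop r with hz
      apply hsf _ (sq2 hbc') z hzb
      refine ⟨(f b).take r, (f c').take r, ?_⟩
      calc (f b).take r ++ (z ++ z) ++ (f c').take r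
          = ((f b).take r ++ z) ++ (z ++ (f c').take r) := by simp only [List.append_assoc, List.nil_append]
        _ = f b ++ f c' := by rw [List.take_append_drop, ← heq]
        _ = Morph.apply f [b, c'] := by simp [Morph.apply]
    · -- word [b, c, c']
      apply hsf _ (sq3 (Ne.symm hcb) hcc) ((f b).drop r) hzb
      refine ⟨(f b).take r, (f c').take r ++ f c', ?_⟩
      calc (f b).take r ++ ((f b).drop r ++ (f b).drop r) ++ ((f c').take r ++ f c')
          = ((f b).take r ++ (f b).drop r) ++ (((f b).drop r ++ (f c').take r) ++ f c') := by
            simp only [List.append_assoc, List.nil_append]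
        _ = f b ++ (f c ++ f c') := by rw [List.take_append_drop, ← heq]
        _ = Morph.apply f [b, c, c'] := by simp [Morph.apply]

lemma no_xyx {X x y : List B} {ℓ : ℕ} (h3 : AntiPowerWord 3 X) (h1 : 1 ≤ ℓ)
    (hx : x.length = ℓ) (hy : y.length = ℓ) (hinf : x ++ y ++ x <:+: X) : False := by
  have hlen : (x ++ y ++ x).length = 3 * ℓ := by simp [hx, hy]; omega
  have hXle : 3 * ℓ ≤ X.length := hlen ▸ hinf.length_le
  have h2 : ℓ ≤ X.length / 3 := (Nat.le_div_iff_mul_le (by norm_num)).mpr (by omega)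
  obtain ⟨l, hl3, hlens, hpw, hfl⟩ := (AP3_def.mp h3).2 ℓ h1 h2 _ hinf hlen
  obtain ⟨u1, u2, u3, rfl⟩ := List.length_eq_three.mp hl3
  have hu1 : u1.length = ℓ := hlens u1 (by simp)
  have hu2 : u2.length = ℓ := hlens u2 (by simp)
  have hu3 : u3.length = ℓ := hlens u3 (by simp)
  have hfl' : (x ++ y) ++ x = (u1 ++ u2) ++ u3 := by
    simpa [List.flatten, List.append_assoc] using hfl
  have e3 : x = u3 := by
    have h' := congrArg (List.drop (2*ℓ)) hfl'
    rwa [List.drop_left' (by simp [hx, hy]; omega),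
      List.drop_left' (by simp [hu1, hu2]; omega)] at h'
  have hfl2 : x ++ (y ++ x) = u1 ++ (u2 ++ u3) := by
    simpa [List.append_assoc] using hfl'
  have e1 : x = u1 := by
    have h' := congrArg (List.take ℓ) hfl2
    rwa [List.take_left' hx, List.take_left' hu1] at h'
  simp only [List.pairwise_cons] at hpw
  exact hpw.1 u3 (by simp) (e1 ▸ e3 ▸ rfl)

lemma aps3_singles {z1 z2 z3 : A} (h12 : z1 ≠ z2) (h13 : z1 ≠ z3) (h23 : z2 ≠ z3) :
    AntiPowerSeq 3 1 [z1, z2, z3] := by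
  exact ⟨[[z1], [z2], [z3]], by simp, by simp,
    by simp [List.pairwise_cons, h12, h13, h23], by simp⟩

lemma AP3_infix {w v : List A} (h3 : AntiPowerWord 3 w) (hv : v <:+: w) :
    AntiPowerWord 3 v := by
  rw [AP3_def] at h3 ⊢
  refine ⟨fun u hne hinf => h3.1 u hne (hinf.trans hv), ?_⟩
  intro ℓ h1 h2 u hu hlen
  exact h3.2 ℓ h1 (le_trans h2 (Nat.div_le_div_right hv.length_le)) u (hu.trans hv) hlen

lemma AP3_four {p1 p2 p3 p4 : A} (h12 : p1 ≠ p2) (h23 : p2 ≠ p3) (h34 : p3 ≠ p4)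
    (h13 : p1 ≠ p3) (h24 : p2 ≠ p4) : AntiPowerWord 3 [p1, p2, p3, p4] := by
  rw [AP3_def]
  constructor
  · rintro u hne ⟨s, t, heq⟩
    have h1 : 1 ≤ u.length := List.length_pos_iff.mpr hne
    have h2 := congrArg List.length heq
    simp at h2
    rcases (by omega : u.length = 1 ∨ u.length = 2) with h | h
    · obtain ⟨z, rfl⟩ := List.length_eq_one_iff.mp h
      have hs : s.length ≤ 2 := by omega
      match s, hs with
      | [], _ => simp at heq; exact h12 (heq.1.symm.trans heq.2.1)
      | [s1], _ => simp at heq; exact h23 (heq.2.1.symm.trans heq.2.2.1)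
      | [s1, s2], _ => simp at heq; exact h34 (heq.2.2.1.symm.trans heq.2.2.2.1)
    · obtain ⟨z1, z2, rfl⟩ := List.length_eq_two.mp h
      have hs : s = [] := List.length_eq_zero_iff.mp (by omega)
      have ht : t = [] := List.length_eq_zero_iff.mp (by omega)
      subst hs; subst ht
      simp at heq
      exact h13 (heq.1.symm.trans heq.2.2.1)
  · intro ℓ hl1 hl2 u hinf hlen
    have hℓ : ℓ = 1 := by simp at hl2; omega
    subst hℓ
    obtain ⟨s, t, heq⟩ := hinf
    have h2 := congrArg List.length heq
    simp [hlen] at h2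
    obtain ⟨z1, z2, z3, rfl⟩ := List.length_eq_three.mp hlen
    have hs : s.length ≤ 1 := by omega
    match s, hs with
    | [], _ =>
      simp at heq
      obtain ⟨e1, e2, e3, -⟩ := heq
      subst e1; subst e2; subst e3
      exact aps3_singles h12 h13 h23
    | [s1], _ =>
      simp at heq
      obtain ⟨-, e1, e2, e3, -⟩ := heq
      subst e1; subst e2; subst e3
      exact aps3_singles h23 h24 h34

lemma AP3_five {a b c : A} (hab : a ≠ b) (hbc : b ≠ c) (hca : c ≠ a) :
    AntiPowerWord 3 [a, b, c, a, b] := by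
  rw [AP3_def]
  constructor
  · rintro u hne ⟨s, t, heq⟩
    have h1 : 1 ≤ u.length := List.length_pos_iff.mpr hne
    have h2 := congrArg List.length heq
    simp at h2
    rcases (by omega : u.length = 1 ∨ u.length = 2) with h | h
    · obtain ⟨z, rfl⟩ := List.length_eq_one_iff.mp h
      have hs : s.length ≤ 3 := by omega
      match s, hs with
      | [], _ => simp at heq; exact hab (heq.1.symm.trans heq.2.1)
      | [s1], _ => simp at heq; exact hbc (heq.2.1.symm.trans heq.2.2.1)
      | [s1, s2], _ => simp at heq; exact hca (heq.2.2.1.symm.trans heq.2.2.2.1)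
      | [s1, s2, s3], _ => simp at heq; exact hab (heq.2.2.2.1.symm.trans heq.2.2.2.2.1)
    · obtain ⟨z1, z2, rfl⟩ := List.length_eq_two.mp h
      have hs : s.length ≤ 1 := by omega
      match s, hs with
      | [], _ =>
        simp at heq
        exact hca (heq.2.2.1.symm.trans heq.1)
      | [s1], _ =>
        simp at heq
        exact hab (heq.2.2.2.1.symm.trans heq.2.1)
  · intro ℓ hl1 hl2 u hinf hlen
    have hℓ : ℓ = 1 := by simp at hl2; omega
    subst hℓ
    obtain ⟨s, t, heq⟩ := hinf
    have h2 := congrArg List.length heq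
    simp [hlen] at h2
    obtain ⟨z1, z2, z3, rfl⟩ := List.length_eq_three.mp hlen
    have hs : s.length ≤ 2 := by omega
    match s, hs with
    | [], _ =>
      simp at heq
      obtain ⟨e1, e2, e3, -⟩ := heq
      subst e1; subst e2; subst e3
      exact aps3_singles hab (Ne.symm hca) hbc
    | [s1], _ =>
      simp at heq
      obtain ⟨-, e1, e2, e3, -⟩ := heq
      subst e1; subst e2; subst e3
      exact aps3_singles hbc (Ne.symm hab) hca
    | [s1, s2], _ =>
      simp at heq
      obtain ⟨-, -, e1, e2, e3, -⟩ := heq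
      subst e1; subst e2; subst e3
      exact aps3_singles hca (Ne.symm hbc) hab

lemma seg_drop (F : List B) (P c d : ℕ) :
    ((F.drop P).take c).drop d = (F.drop (P + d)).take (c - d) := by
  rw [List.drop_take, List.drop_drop]

lemma seg_take (F : List B) (P c d : ℕ) (h : d ≤ c) :
    ((F.drop P).take c).take d = (F.drop P).take d := by
  rw [List.take_take, min_eq_left h]

lemma mod_gap {L a b : ℕ} (ha : a % L = 0) (hb : b % L = 0) (hab : a < b) :
    a + L ≤ b := by
  obtain ⟨qa, rfl⟩ := Nat.dvd_of_mod_eq_zero ha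
  obtain ⟨qb, rfl⟩ := Nat.dvd_of_mod_eq_zero hb
  have hL : 0 < L := by
    rcases Nat.eq_zero_or_pos L with h | h
    · subst h; simp at hab
    · exact h
  have hq : qa < qb := by
    by_contra h
    push_neg at h
    exact absurd (Nat.mul_le_mul_left L h) (by omega)
  have := Nat.mul_le_mul_left L (show qa + 1 ≤ qb by omega)
  rw [Nat.mul_add, Nat.mul_one] at this
  omega

lemma NSCore (hL : 1 ≤ L) (huni : ∀ a, (f a).length = L)
    (hsf : ∀ v : List A, SquareFree v → SquareFree (Morph.apply f v))
    {w : List A} (hwsq : SquareFree w) {x : List B} {ℓ : ℕ}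
    (hxlen : x.length = ℓ) (hlL : L + 1 ≤ ℓ)
    {PS PB cS cB : ℕ}
    (hoccS : ((Morph.apply f w).drop PS).take ℓ = x)
    (hoccB : ((Morph.apply f w).drop PB).take ℓ = x)
    (hbS : PS + ℓ ≤ w.length * L) (hbB : PB + ℓ ≤ w.length * L)
    (hcS : (PS + cS) % L = 0) (hcB : (PB + cB) % L = 0)
    (h1S : 1 ≤ cS) (hSB : cS < cB) (hcBL : cB + 1 ≤ L) : False := by
  set F := Morph.apply f w with hF
  have hcSL : cS + 1 ≤ L := by omega
  have hcSl : cS + 1 ≤ ℓ := by omega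
  have hcBl : cB + 1 ≤ ℓ := by omega
  -- block indices at the cuts
  obtain ⟨qS, hqS⟩ : ∃ qS, qS * L = PS + cS :=
    ⟨(PS + cS) / L, Nat.div_mul_cancel (Nat.dvd_of_mod_eq_zero hcS)⟩
  obtain ⟨qB, hqB⟩ : ∃ qB, qB * L = PB + cB :=
    ⟨(PB + cB) / L, Nat.div_mul_cancel (Nat.dvd_of_mod_eq_zero hcB)⟩
  have hq1S : 1 ≤ qS := by
    rcases Nat.eq_zero_or_pos qS with h | h
    · rw [h] at hqS; simp at hqS; omega
    · exact h
  have hq1B : 1 ≤ qB := by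
    rcases Nat.eq_zero_or_pos qB with h | h
    · rw [h] at hqB; simp at hqB; omega
    · exact h
  have hqSlt : qS < w.length := by
    have h1 : qS * L < w.length * L := by omega
    exact Nat.lt_of_mul_lt_mul_right h1
  have hqBlt : qB < w.length := by
    have h1 : qB * L < w.length * L := by omega
    exact Nat.lt_of_mul_lt_mul_right h1
  have hqSL : L ≤ qS * L := by
    have := Nat.mul_le_mul_right L hq1S
    omega
  have hqBL : L ≤ qB * L := by
    have := Nat.mul_le_mul_right L hq1B
    omega
  have hqSm : (qS - 1) * L = PS + cS - L := by
    rw [Nat.sub_mul, one_mul]; omega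
  have hqBm : (qB - 1) * L = PB + cB - L := by
    rw [Nat.sub_mul, one_mul]; omega
  -- the guard : ℓ ≤ L + cS
  have hguard : ℓ ≤ L + cS := by
    by_contra hg
    push_neg at hg
    have hseg : ((F.drop (qS * L)).take L) = f (w[qS]) := seg_block huni w qS hqSlt
    have hocc2 : (F.drop (PB + cS)).take L = f (w[qS]) := by
      rw [occ_seg hoccB cS L (by omega), ← occ_seg hoccS cS L (by omega), ← hqS, hseg]
    have hsy := sync hL huni hsf hwsq (w[qS]) (PB + cS) (by omega) hocc2
    have := mod_gap hsy hcB (by omega)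
    omega
  have hguardB : ℓ ≤ L + cB := by omega
  -- the four letter facts
  have EaftS : (f (w[qS])).take (ℓ - cS) = x.drop cS := by
    rw [← seg_block huni w qS hqSlt, seg_take _ _ _ _ (by omega), hqS,
      occ_seg hoccS cS (ℓ - cS) (by omega), List.take_of_length_le (by simp [hxlen])]
  have EaftB : (f (w[qB])).take (ℓ - cB) = x.drop cB := by
    rw [← seg_block huni w qB hqBlt, seg_take _ _ _ _ (by omega), hqB,
      occ_seg hoccB cB (ℓ - cB) (by omega), List.take_of_length_le (by simp [hxlen])]
  have EbefS : (f (w[qS - 1])).drop (L - cS) = x.take cS := by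
    rw [← seg_block huni w (qS - 1) (by omega), seg_drop,
      show (qS - 1) * L + (L - cS) = PS by omega,
      show L - (L - cS) = cS by omega]
    have h0 := occ_seg hoccS 0 cS (by omega)
    rw [Nat.add_zero] at h0
    rw [h0]; simp
  have EbefB : (f (w[qB - 1])).drop (L - cB) = x.take cB := by
    rw [← seg_block huni w (qB - 1) (by omega), seg_drop,
      show (qB - 1) * L + (L - cB) = PB by omega,
      show L - (L - cB) = cB by omega]
    have h0 := occ_seg hoccB 0 cB (by omega)
    rw [Nat.add_zero] at h0
    rw [h0]; simp
  have hadjS : w[qS - 1] ≠ w[qS] := by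
    have h' := adj_ne hwsq (q := qS - 1) (by omega)
    simpa only [show qS - 1 + 1 = qS from by omega] using h'
  have hadjB : w[qB - 1] ≠ w[qB] := by
    have h' := adj_ne hwsq (q := qB - 1) (by omega)
    simpa only [show qB - 1 + 1 = qB from by omega] using h'
  set z := (x.drop cS).take (cB - cS) with hzdef
  have hzlen : z.length = cB - cS := by
    simp [hzdef, hxlen]
    omega
  have hzne : z ≠ [] := by
    intro h0
    rw [h0] at hzlen
    simp at hzlen
    omega
  have hxcB : x.take cB = x.take cS ++ z := by
    rw [show cB = cS + (cB - cS) from by omega, List.take_add]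
  have haftSz : (f (w[qS])).take (cB - cS) = z := by
    rw [← min_eq_left (show cB - cS ≤ ℓ - cS from by omega), ← List.take_take, EaftS]
  by_cases hgb : w[qS] = w[qB - 1]
  · -- synchronizing letter g
    have hne1 : w[qS - 1] ≠ w[qS] := hadjS
    have hne2 : w[qS] ≠ w[qB] := by rw [hgb]; exact hadjB
    have EbefB' : (f (w[qS])).drop (L - cB) = x.take cB := by rw [hgb]; exact EbefB
    have factA : f (w[qS]) = x.drop cS ++ (f (w[qS])).drop (ℓ - cS) := by
      conv_lhs => rw [← List.take_append_drop (ℓ - cS) (f (w[qS]))]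
      rw [EaftS]
    have factB : f (w[qS]) = (f (w[qS])).take (L - cB) ++ x.take cB := by
      conv_lhs => rw [← List.take_append_drop (L - cB) (f (w[qS]))]
      rw [EbefB']
    have hS12 : x.take cS ++ (f (w[qS]) ++ x.drop cB)
        = x ++ ((f (w[qS])).drop (ℓ - cS) ++ x.drop cB) := by
      conv_lhs => rw [factA]
      simp only [← List.append_assoc, List.take_append_drop]
    have hS22 : x.take cS ++ (f (w[qS]) ++ x.drop cB)
        = (x.take cS ++ (f (w[qS])).take (L - cB)) ++ x := by
      conv_lhs => rw [factB]
      simp only [List.append_assoc, List.take_append_drop]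
    have hPlen : (x.take cS ++ (f (w[qS])).take (L - cB)).length = cS + (L - cB) := by
      simp [List.length_take, List.length_append, hxlen, huni (w[qS])]
      omega
    have hPx : x.take cS ++ (f (w[qS])).take (L - cB) = x.take (cS + (L - cB)) := by
      have h12 := hS22.symm.trans hS12
      have h' := congrArg (List.take (cS + (L - cB))) h12
      rw [List.take_left' hPlen, List.take_append,
        show cS + (L - cB) - x.length = 0 from by rw [hxlen]; omega,
        List.take_zero, List.append_nil] at h'
      exact h'
    have hρl : cS + (L - cB) ≤ ℓ := by omega
    have hz2ne : x.take (cS + (L - cB)) ≠ [] := by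
      intro h0
      have := congrArg List.length h0
      rw [List.length_take, hxlen] at this
      simp at this
      omega
    have hx2 : x = x.take (cS + (L - cB)) ++ x.drop (cS + (L - cB)) :=
      (List.take_append_drop _ x).symm
    have hkey : x.take cS ++ (f (w[qS]) ++ x.drop cB)
        = x.take (cS + (L - cB)) ++ (x.take (cS + (L - cB)) ++ x.drop (cS + (L - cB))) := by
      rw [hS22, hPx]
      exact congrArg (x.take (cS + (L - cB)) ++ ·) hx2
    refine hsf [w[qS - 1], w[qS], w[qB]] (sq3 hne1 hne2) (x.take (cS + (L - cB))) hz2ne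
      ⟨(f (w[qS - 1])).take (L - cS),
       x.drop (cS + (L - cB)) ++ (f (w[qB])).drop (ℓ - cB), ?_⟩
    have e1 : Morph.apply f [w[qS - 1], w[qS], w[qB]]
        = f (w[qS - 1]) ++ (f (w[qS]) ++ f (w[qB])) := by simp [Morph.apply]
    rw [e1]
    conv_rhs => rw [← List.take_append_drop (L - cS) (f (w[qS - 1])), EbefS,
      ← List.take_append_drop (ℓ - cB) (f (w[qB])), EaftB]
    simp only [List.append_assoc]
    congr 1
    have h2 := congrArg (· ++ ((f (w[qB])).drop (ℓ - cB))) hkey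
    simp only [List.append_assoc] at h2
    exact h2.symm
  · -- two distinct letters, direct square
    refine hsf [w[qB - 1], w[qS]] (sq2 (fun h => hgb h.symm)) z hzne
      ⟨(f (w[qB - 1])).take (L - cB) ++ x.take cS, (f (w[qS])).drop (cB - cS), ?_⟩
    have e1 : Morph.apply f [w[qB - 1], w[qS]] = f (w[qB - 1]) ++ f (w[qS]) := by
      simp [Morph.apply]
    rw [e1]
    conv_rhs => rw [← List.take_append_drop (L - cB) (f (w[qB - 1])), EbefB, hxcB,
      ← List.take_append_drop (cB - cS) (f (w[qS])), haftSz]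
    simp only [List.append_assoc]

lemma run_xyx {w : List A} (hw3 : AntiPowerWord 3 w) {st m : ℕ} (hm : 1 ≤ m)
    (hn : st + 3 * m ≤ w.length)
    (hrun : ∀ j, j < m → w[st + j]? = w[st + 2 * m + j]?) : False := by
  have key : (w.drop (st + 2 * m)).take m = (w.drop st).take m := by
    apply List.ext_getElem?
    intro j
    by_cases hj : j < m
    · rw [List.getElem?_take, List.getElem?_take, if_pos hj, if_pos hj,
        List.getElem?_drop, List.getElem?_drop, ← hrun j hj]
    · rw [List.getElem?_take, List.getElem?_take, if_neg hj, if_neg hj]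
  have e : (w.drop st).take (3 * m) = (w.drop st).take m ++
      ((w.drop (st + m)).take m ++ (w.drop (st + 2 * m)).take m) := by
    rw [show 3 * m = m + (m + m) from by ring, List.take_add, List.take_add,
      List.drop_drop, List.drop_drop, show st + m + m = st + 2 * m from by ring]
  rw [key] at e
  apply no_xyx (X := w) hw3 (ℓ := m) hm (x := (w.drop st).take m)
      (y := (w.drop (st + m)).take m)
  · rw [List.length_take, List.length_drop]; omega
  · rw [List.length_take, List.length_drop]; omega
  · have : (w.drop st).take m ++ (w.drop (st + m)).take m ++ (w.drop st).take m
        = (w.drop st).take (3 * m) := by rw [e, List.append_assoc]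
    rw [this]
    exact infix_drop_take w st (3 * m)

lemma core4 (hL : 1 ≤ L) (huni : ∀ a, (f a).length = L)
    (H5 : ∀ v : List A, v.length ≤ 5 → AntiPowerWord 3 v → AntiPowerWord 3 (Morph.apply f v))
    {a e b e' : A} {r : ℕ} (h1r : 1 ≤ r) (hrL : r < L)
    (h12 : a ≠ e) (h23 : e ≠ b) (h34 : b ≠ e') (h13 : a ≠ b) (h24 : e ≠ e')
    (hS : (f a).drop r = (f b).drop r) (hP : (f e).take r = (f e').take r) : False := by
  have h3v := H5 [a, e, b, e'] (by simp) (AP3_four h12 h23 h34 h13 h24)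
  set G := Morph.apply f [a, e, b, e'] with hG
  have hGexp : G = f a ++ (f e ++ (f b ++ f e')) := by simp [hG, Morph.apply]
  have hxyx : ((G.drop r).take (3 * L)) = ((f a).drop r ++ (f e).take r) ++
      (((f e).drop r ++ (f b).take r) ++ ((f a).drop r ++ (f e).take r)) := by
    rw [hGexp, List.drop_append,
      show r - (f a).length = 0 from by rw [huni a]; omega,
      List.drop_zero, List.take_append,
      List.take_of_length_le (show ((f a).drop r).length ≤ 3 * L from by
        rw [List.length_drop, huni a]; omega),
      show 3 * L - ((f a).drop r).length = 2 * L + r from by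
        rw [List.length_drop, huni a]; omega,
      List.take_append,
      List.take_of_length_le (show (f e).length ≤ 2 * L + r from by rw [huni e]; omega),
      show 2 * L + r - (f e).length = L + r from by rw [huni e]; omega,
      List.take_append,
      List.take_of_length_le (show (f b).length ≤ L + r from by rw [huni b]; omega),
      show L + r - (f b).length = r from by rw [huni b]; omega]
    conv_lhs => rw [← List.take_append_drop r (f e), ← List.take_append_drop r (f b)]
    rw [← hS, ← hP]
    simp only [List.append_assoc]
  apply no_xyx (X := G) h3v (ℓ := L) hL (x := (f a).drop r ++ (f e).take r)
      (y := (f e).drop r ++ (f b).take r)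
  · rw [List.length_append, List.length_drop, List.length_take, huni a, huni e]; omega
  · rw [List.length_append, List.length_drop, List.length_take, huni e, huni b]; omega
  · have : ((f a).drop r ++ (f e).take r) ++ ((f e).drop r ++ (f b).take r)
        ++ ((f a).drop r ++ (f e).take r) = (G.drop r).take (3 * L) := by
      rw [hxyx, List.append_assoc]
    rw [this]
    exact infix_drop_take G r (3 * L)

lemma take_drop_cancel (l X : List B) (n : ℕ) : l.take n ++ (l.drop n ++ X) = l ++ X := by
  rw [← List.append_assoc, List.take_append_drop]

lemma blocklt {n q L : ℕ} (hL : 1 ≤ L) (h : q * L + L ≤ n * L) : q < n :=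
  Nat.lt_of_mul_lt_mul_right (show q * L < n * L from by omega)

lemma mod_eq_r {q r L : ℕ} (h : r < L) : (q * L + r) % L = r := by
  rw [Nat.add_comm, Nat.add_mul_mod_self_right, Nat.mod_eq_of_lt h]

lemma small_case (hL : 1 ≤ L) (huni : ∀ a : A, (f a).length = L)
    (H5 : ∀ v : List A, v.length ≤ 5 → AntiPowerWord 3 v → AntiPowerWord 3 (Morph.apply f v))
    {w : List A} (hw3 : AntiPowerWord 3 w) {x y : List B} {ℓ i : ℕ} (h1 : 1 ≤ ℓ)
    (hx : x.length = ℓ) (hy : y.length = ℓ)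
    (hocc : ((Morph.apply f w).drop i).take (3 * ℓ) = x ++ y ++ x)
    (hub : i + 3 * ℓ ≤ w.length * L)
    (hsmall : 3 * ℓ ≤ 4 * L + 1) : False := by
  set F := Morph.apply f w with hF
  obtain ⟨q1, r1, hiq, hr1⟩ : ∃ q1 r1, i = q1 * L + r1 ∧ r1 < L :=
    ⟨i / L, i % L, by rw [Nat.mul_comm]; exact (Nat.div_add_mod i L).symm,
      Nat.mod_lt _ (by omega)⟩
  set v := (w.drop q1).take 5 with hv
  have hvw : v <:+: w := infix_drop_take w q1 5
  have h3v := H5 v (by rw [hv, List.length_take]; omega) (AP3_infix hw3 hvw)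
  have hvlen : v.length = min 5 (w.length - q1) := by rw [hv, List.length_take, List.length_drop]
  have hlenv : (Morph.apply f v).length = v.length * L := apply_length huni v
  have hbound : r1 + 3 * ℓ ≤ v.length * L := by
    rcases le_or_gt 5 (w.length - q1) with h5 | h5
    · have h5' : v.length = 5 := by omega
      rw [h5']; omega
    · have hvl : v.length = w.length - q1 := by omega
      have hsub : (w.length - q1) * L = w.length * L - q1 * L := by rw [Nat.sub_mul]
      have hq1n : q1 * L ≤ w.length * L := by omega
      rw [hvl, hsub]
      omega
  have happly : Morph.apply f (w.drop q1) = F.drop (q1 * L) := apply_drop huni w q1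
  have hFq1 : F.drop (q1 * L) = Morph.apply f v ++ Morph.apply f ((w.drop q1).drop 5) := by
    rw [← happly]
    conv_lhs => rw [show w.drop q1 = v ++ (w.drop q1).drop 5 from (List.take_append_drop 5 _).symm]
    rw [apply_append]
  have hu : x ++ y ++ x = ((Morph.apply f v).drop r1).take (3 * ℓ) := by
    rw [← hocc, hiq, ← List.drop_drop, hFq1, List.drop_append,
      show r1 - (Morph.apply f v).length = 0 from by omega,
      List.drop_zero, List.take_append,
      show 3 * ℓ - ((Morph.apply f v).drop r1).length = 0 from by
        rw [List.length_drop, hlenv]; omega,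
      List.take_zero, List.append_nil]
  exact no_xyx h3v h1 hx hy (hu ▸ infix_drop_take (Morph.apply f v) r1 (3 * ℓ))

lemma occ_seg0 {F x : List B} {P l : ℕ} (hocc : (F.drop P).take l = x) (c : ℕ)
    (h : c ≤ l) : (F.drop P).take c = x.take c := by
  have h0 := occ_seg hocc 0 c (by omega)
  simpa using h0

lemma sync_case (hL : 1 ≤ L) (huni : ∀ a : A, (f a).length = L)
    (hsf : ∀ v : List A, SquareFree v → SquareFree (Morph.apply f v))
    (H5 : ∀ v : List A, v.length ≤ 5 → AntiPowerWord 3 v → AntiPowerWord 3 (Morph.apply f v))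
    {w : List A} (hw3 : AntiPowerWord 3 w) {x : List B} {ℓ m i : ℕ}
    (hx : x.length = ℓ)
    (hocc1 : ((Morph.apply f w).drop i).take ℓ = x)
    (hocc2 : ((Morph.apply f w).drop (i + 2 * ℓ)).take ℓ = x)
    (hub : i + 3 * ℓ ≤ w.length * L)
    (hl : ℓ = m * L) (hm2 : 2 ≤ m)
    {q1 r1 : ℕ} (hiq : i = q1 * L + r1) (hr1 : r1 < L) : False := by
  set F := Morph.apply f w with hF
  have hml : L ≤ m * L := by
    have := Nat.mul_le_mul_right L (show 1 ≤ m from by omega)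
    rwa [one_mul] at this
  have h2m : 2 * m * L = 2 * ℓ := by rw [Nat.mul_assoc, ← hl]
  have h3m : 3 * m * L = 3 * ℓ := by rw [Nat.mul_assoc, ← hl]
  have hinj : ∀ {a b : A}, f a = f b → a = b := fun h => apply_inj hL huni hsf h
  have hrun : ∀ j, (r1 = 0 ∨ 1 ≤ j) → j < m → w[q1 + j]? = w[q1 + j + 2 * m]? := by
    intro j hj0 hjm
    have hjL : j * L + L ≤ m * L := by
      have := Nat.mul_le_mul_right L (show j + 1 ≤ m from by omega)
      rwa [Nat.add_mul, one_mul] at this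
    have hd : r1 ≤ j * L := by
      rcases hj0 with h | h
      · omega
      · have := Nat.mul_le_mul_right L h
        rw [one_mul] at this
        omega
    have he1 : (q1 + j) * L = i + (j * L - r1) := by rw [Nat.add_mul]; omega
    have he2 : (q1 + j + 2 * m) * L = i + 2 * ℓ + (j * L - r1) := by
      rw [Nat.add_mul, Nat.add_mul]; omega
    have hcap : (j * L - r1) + L ≤ ℓ := by rw [hl]; omega
    have hlt1 : q1 + j < w.length := blocklt hL (by rw [he1]; omega)
    have hlt2 : q1 + j + 2 * m < w.length := blocklt hL (by rw [he2]; omega)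
    have hseg1 : f (w[q1 + j]) = (x.drop (j * L - r1)).take L := by
      rw [← seg_block huni w _ hlt1, he1, occ_seg hocc1 _ _ hcap]
    have hseg2 : f (w[q1 + j + 2 * m]) = (x.drop (j * L - r1)).take L := by
      rw [← seg_block huni w _ hlt2, he2, occ_seg hocc2 _ _ hcap]
    rw [List.getElem?_eq_getElem hlt1, List.getElem?_eq_getElem hlt2,
      hinj (hseg1.trans hseg2.symm)]
  rcases Nat.eq_zero_or_pos r1 with hr10 | hr10
  · -- aligned case : full run of m blocks starting at q1
    have hq3m : (q1 + 3 * m) * L = i + 3 * ℓ := by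
      rw [Nat.add_mul]; omega
    apply run_xyx hw3 (st := q1) (m := m) (by omega) ?_ ?_
    · exact Nat.le_of_mul_le_mul_right (by omega : (q1 + 3 * m) * L ≤ w.length * L) (by omega)
    · intro j hj
      rw [show q1 + 2 * m + j = q1 + j + 2 * m from by omega]
      exact hrun j (Or.inl hr10) hj
  · -- r1 ≥ 1
    have hq1lt : q1 < w.length := blocklt hL (by omega)
    have heind : (q1 + m) * L = i + (ℓ - r1) := by rw [Nat.add_mul]; omega
    have hbind : (q1 + 2 * m) * L + r1 = i + 2 * ℓ := by rw [Nat.add_mul]; omega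
    have he'ind : (q1 + 3 * m) * L = i + 2 * ℓ + (ℓ - r1) := by rw [Nat.add_mul]; omega
    have hlt_e : q1 + m < w.length := blocklt hL (by rw [heind]; omega)
    have hlt_b : q1 + 2 * m < w.length := blocklt hL (by omega)
    have hlt_e' : q1 + 3 * m < w.length :=
      Nat.lt_of_mul_lt_mul_right (show (q1 + 3 * m) * L < w.length * L from by rw [he'ind]; omega)
    have hsa : (f (w[q1])).drop r1 = x.take (L - r1) := by
      rw [← seg_block huni w _ hq1lt, seg_drop, ← hiq, occ_seg0 hocc1 _ (by omega)]
    have hsb : (f (w[q1 + 2 * m])).drop r1 = x.take (L - r1) := by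
      rw [← seg_block huni w _ hlt_b, seg_drop, hbind, occ_seg0 hocc2 _ (by omega)]
    have hs : (f (w[q1])).drop r1 = (f (w[q1 + 2 * m])).drop r1 := hsa.trans hsb.symm
    have hpe : (f (w[q1 + m])).take r1 = (x.drop (ℓ - r1)).take r1 := by
      rw [← seg_block huni w _ hlt_e, seg_take _ _ _ _ (le_of_lt hr1), heind,
        occ_seg hocc1 _ _ (by omega)]
    have hpe' : (f (w[q1 + 3 * m])).take r1 = (x.drop (ℓ - r1)).take r1 := by
      rw [← seg_block huni w _ hlt_e', seg_take _ _ _ _ (le_of_lt hr1), he'ind,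
        occ_seg hocc2 _ _ (by omega)]
    have hp : (f (w[q1 + m])).take r1 = (f (w[q1 + 3 * m])).take r1 := hpe.trans hpe'.symm
    by_cases hab : w[q1] = w[q1 + 2 * m]
    · apply run_xyx hw3 (st := q1) (m := m) (by omega) (by omega) ?_
      intro j hj
      rcases Nat.eq_zero_or_pos j with h0 | h0
      · subst h0
        rw [Nat.add_zero, show q1 + 2 * m + 0 = q1 + 2 * m from by omega,
          List.getElem?_eq_getElem hq1lt, List.getElem?_eq_getElem hlt_b, hab]
      · rw [show q1 + 2 * m + j = q1 + j + 2 * m from by omega]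
        exact hrun j (Or.inr h0) hj
    · by_cases hee : w[q1 + m] = w[q1 + 3 * m]
      · apply run_xyx hw3 (st := q1 + 1) (m := m) (by omega) (by omega) ?_
        intro j hj
        rcases eq_or_lt_of_le (show j + 1 ≤ m from hj) with he | hlt
        · rw [show q1 + 1 + j = q1 + m from by omega,
            show q1 + 1 + 2 * m + j = q1 + 3 * m from by omega,
            List.getElem?_eq_getElem hlt_e, List.getElem?_eq_getElem hlt_e', hee]
        · rw [show q1 + 1 + j = q1 + (j + 1) from by omega,
            show q1 + 1 + 2 * m + j = q1 + (j + 1) + 2 * m from by omega]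
          exact hrun (j + 1) (Or.inr (by omega)) (by omega)
      · -- the four-letter configurations
        have hfafb : f (w[q1]) = f (w[q1 + 2 * m]) → False := fun h => hab (hinj h)
        by_cases hP1 : w[q1] = w[q1 + m]
        · by_cases hP4 : w[q1 + 2 * m] = w[q1 + 3 * m]
          · -- degenerate (i) : f a = f b
            apply hfafb
            have htk : (f (w[q1])).take r1 = (f (w[q1 + 2 * m])).take r1 := by
              rw [hP1, hP4]; exact hp
            calc f (w[q1]) = (f (w[q1])).take r1 ++ (f (w[q1])).drop r1 :=
                  (List.take_append_drop _ _).symm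
              _ = (f (w[q1 + 2 * m])).take r1 ++ (f (w[q1 + 2 * m])).drop r1 := by
                  rw [htk, hs]
              _ = f (w[q1 + 2 * m]) := List.take_append_drop _ _
          · -- config v2 = [a, e', b, e]
            have hP3 : w[q1] ≠ w[q1 + 3 * m] := fun h => hee (hP1.symm.trans h)
            have hP2 : w[q1 + 2 * m] ≠ w[q1 + m] := fun h => hab (hP1.trans h.symm)
            exact core4 hL huni H5 (by omega) hr1 hP3 (fun h => hP4 h.symm)
              hP2 hab (fun h => hee h.symm) hs hp.symm
        · by_cases hP2 : w[q1 + 2 * m] = w[q1 + m]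
          · by_cases hP3 : w[q1] = w[q1 + 3 * m]
            · -- degenerate (ii) : f a = f b
              apply hfafb
              have htk : (f (w[q1])).take r1 = (f (w[q1 + 2 * m])).take r1 := by
                rw [hP3, hP2]; exact hp.symm
              calc f (w[q1]) = (f (w[q1])).take r1 ++ (f (w[q1])).drop r1 :=
                    (List.take_append_drop _ _).symm
                _ = (f (w[q1 + 2 * m])).take r1 ++ (f (w[q1 + 2 * m])).drop r1 := by
                    rw [htk, hs]
                _ = f (w[q1 + 2 * m]) := List.take_append_drop _ _
            · -- config v4 = [b, e', a, e]
              have hP4 : w[q1 + 2 * m] ≠ w[q1 + 3 * m] := fun h => hee (hP2.symm.trans h)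
              exact core4 hL huni H5 (by omega) hr1 hP4 (fun h => hP3 h.symm)
                hP1 (fun h => hab h.symm) (fun h => hee h.symm) hs.symm hp.symm
          · by_cases hP4 : w[q1 + 2 * m] = w[q1 + 3 * m]
            · -- config v3 = [b, e, a, e']
              have hP3 : w[q1] ≠ w[q1 + 3 * m] := fun h => hab (h.trans hP4.symm)
              exact core4 hL huni H5 (by omega) hr1 hP2
                (fun h => hP1 h.symm) hP3 (fun h => hab h.symm) hee hs.symm hp
            · -- config v1 = [a, e, b, e']
              exact core4 hL huni H5 (by omega) hr1 hP1 (fun h => hP2 h.symm) hP4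
                hab hee hs hp

lemma divmod (t L : ℕ) (hL : 1 ≤ L) : ∃ q r, t = q * L + r ∧ r < L :=
  ⟨t / L, t % L, by rw [Nat.mul_comm]; exact (Nat.div_add_mod t L).symm,
    Nat.mod_lt _ (by omega)⟩

lemma even_case (hL : 1 ≤ L) (huni : ∀ a : A, (f a).length = L)
    (H5 : ∀ v : List A, v.length ≤ 5 → AntiPowerWord 3 v → AntiPowerWord 3 (Morph.apply f v))
    {a b c : A} (hab : a ≠ b) (hbc : b ≠ c) (hca : c ≠ a)
    {L2 : ℕ} (hL2 : L = L2 + L2) : False := by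
  have hL21 : 1 ≤ L2 := by omega
  have h3v := H5 [a, b, c, a, b] (by simp) (AP3_five hab hbc hca)
  set G := Morph.apply f [a, b, c, a, b] with hG
  have hGexp : G = f a ++ (f b ++ (f c ++ (f a ++ f b))) := by simp [hG, Morph.apply]
  apply no_xyx (X := G) h3v (ℓ := L + L2) (by omega)
      (x := f a ++ (f b).take L2) (y := (f b).drop L2 ++ f c) ?_ ?_ ?_
  · rw [List.length_append, huni a, List.length_take, huni b]; omega
  · rw [List.length_append, List.length_drop, huni b, huni c]; omega
  · have hu : (f a ++ (f b).take L2) ++ ((f b).drop L2 ++ f c) ++ (f a ++ (f b).take L2)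
        = (G.drop 0).take (3 * (L + L2)) := by
      rw [List.drop_zero, hGexp,
        List.take_append,
        List.take_of_length_le (show (f a).length ≤ 3 * (L + L2) from by rw [huni a]; omega),
        show 3 * (L + L2) - (f a).length = 2 * L + 3 * L2 from by rw [huni a]; omega,
        List.take_append,
        List.take_of_length_le (show (f b).length ≤ 2 * L + 3 * L2 from by rw [huni b]; omega),
        show 2 * L + 3 * L2 - (f b).length = L + 3 * L2 from by rw [huni b]; omega,
        List.take_append,
        List.take_of_length_le (show (f c).length ≤ L + 3 * L2 from by rw [huni c]; omega),
        show L + 3 * L2 - (f c).length = 3 * L2 from by rw [huni c]; omega,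
        List.take_append,
        List.take_of_length_le (show (f a).length ≤ 3 * L2 from by rw [huni a]; omega),
        show 3 * L2 - (f a).length = L2 from by rw [huni a]; omega]
      simp only [List.append_assoc, take_drop_cancel]
    rw [hu]
    exact infix_drop_take G 0 (3 * (L + L2))

lemma xyx_false [Fintype A] (hA : 3 ≤ Fintype.card A)
    (hL : 1 ≤ L) (huni : ∀ a : A, (f a).length = L)
    (hsf : ∀ v : List A, SquareFree v → SquareFree (Morph.apply f v))
    (H5 : ∀ v : List A, v.length ≤ 5 → AntiPowerWord 3 v → AntiPowerWord 3 (Morph.apply f v))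
    {w : List A} (hw3 : AntiPowerWord 3 w) {x y : List B} {ℓ : ℕ} (h1 : 1 ≤ ℓ)
    (hx : x.length = ℓ) (hy : y.length = ℓ)
    (hinf : x ++ y ++ x <:+: Morph.apply f w) : False := by
  rcases Nat.even_or_odd L with hev | hodd
  · -- L even
    obtain ⟨L2, hL2⟩ := hev
    have hA1 : Nonempty A := Fintype.card_pos_iff.mp (by omega)
    obtain ⟨a⟩ := hA1
    obtain ⟨b, hb⟩ := Fintype.exists_ne_of_one_lt_card (by omega) a
    obtain ⟨c, hc⟩ : ∃ c : A, c ≠ a ∧ c ≠ b := by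
      classical
      by_contra hno
      push_neg at hno
      have hsub : (Finset.univ : Finset A) ⊆ {a, b} := by
        intro z _
        by_cases hz : z = a
        · simp [hz]
        · simp [hno z hz]
      have hcard := Finset.card_le_card hsub
      rw [Finset.card_univ] at hcard
      have h2 : ({a, b} : Finset A).card ≤ 2 :=
        (Finset.card_insert_le _ _).trans (by simp)
      omega
    exact even_case hL huni H5 hb.symm hc.2.symm hc.1 hL2
  · -- L odd
    obtain ⟨pre, suf, hFeq⟩ := hinf
    have hFlen : (Morph.apply f w).length = w.length * L := apply_length huni w
    have hdrop1 : (Morph.apply f w).drop pre.length = x ++ (y ++ (x ++ suf)) := by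
      rw [← hFeq, show pre ++ (x ++ y ++ x) ++ suf = pre ++ (x ++ (y ++ (x ++ suf))) from by
        simp only [List.append_assoc], List.drop_left' rfl]
    have hocc1 : ((Morph.apply f w).drop pre.length).take ℓ = x := by
      rw [hdrop1, List.take_left' hx]
    have hdrop2 : (Morph.apply f w).drop (pre.length + 2 * ℓ) = x ++ suf := by
      rw [← hFeq, show pre ++ (x ++ y ++ x) ++ suf = (pre ++ (x ++ y)) ++ (x ++ suf) from by
        simp only [List.append_assoc],
        List.drop_left' (by rw [List.length_append, List.length_append, hx, hy]; ring)]
    have hocc2 : ((Morph.apply f w).drop (pre.length + 2 * ℓ)).take ℓ = x := by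
      rw [hdrop2, List.take_left' hx]
    have hub : pre.length + 3 * ℓ ≤ w.length * L := by
      have hlen := congrArg List.length hFeq
      rw [List.length_append, List.length_append, List.length_append, List.length_append,
        hx, hy, hFlen] at hlen
      omega
    rcases le_or_gt (3 * ℓ) (4 * L + 1) with hsm | hbig
    · refine small_case hL huni H5 hw3 h1 hx hy ?_ hub hsm
      rw [hdrop1, show x ++ (y ++ (x ++ suf)) = (x ++ y ++ x) ++ suf from by
        simp only [List.append_assoc],
        List.take_left' (by rw [List.length_append, List.length_append, hx, hy]; ring)]
    · have hlL : L + 1 ≤ ℓ := by omega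
      obtain ⟨q1, r1, hiq, hr1⟩ := divmod pre.length L hL
      obtain ⟨q2, r2, hiq2, hr2⟩ := divmod (pre.length + 2 * ℓ) L hL
      have hwsq : SquareFree w := (AP3_def.mp hw3).1
      by_cases hrr : r1 = r2
      · -- synchronized
        have hq12 : q1 ≤ q2 :=
          Nat.le_of_mul_le_mul_right (show q1 * L ≤ q2 * L from by omega) (by omega)
        have hMeq : (q2 - q1) * L = 2 * ℓ := by rw [Nat.sub_mul]; omega
        obtain ⟨m, hm⟩ : ∃ m', q2 - q1 = m' + m' := by
          rcases Nat.even_or_odd (q2 - q1) with he | ho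
          · exact he
          · exfalso
            have hoM := ho.mul hodd
            rw [hMeq] at hoM
            rcases hoM with ⟨k, hk⟩
            omega
        rw [hm, Nat.add_mul] at hMeq
        have hl : ℓ = m * L := by omega
        have hm2 : 2 ≤ m := by
          by_contra hcm
          push_neg at hcm
          interval_cases m
          · rw [Nat.zero_mul] at hl; omega
          · rw [Nat.one_mul] at hl; omega
        exact sync_case hL huni hsf H5 hw3 hx hocc1 hocc2 hub hl hm2 hiq hr1
      · -- not synchronized
        rcases Nat.eq_zero_or_pos r1 with h10 | h10
        · have hq1lt : q1 < w.length := blocklt hL (by omega)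
          have hocc2' : ((Morph.apply f w).drop (pre.length + 2 * ℓ)).take L = f (w[q1]) := by
            rw [occ_seg0 hocc2 L (by omega), ← occ_seg0 hocc1 L (by omega),
              show pre.length = q1 * L from by omega, seg_block huni w q1 hq1lt]
          have hmod := sync hL huni hsf hwsq (w[q1]) _ (by omega) hocc2'
          rw [hiq2, mod_eq_r hr2] at hmod
          omega
        rcases Nat.eq_zero_or_pos r2 with h20 | h20
        · have hq2lt : q2 < w.length := blocklt hL (by omega)
          have hocc1' : ((Morph.apply f w).drop pre.length).take L = f (w[q2]) := by
            rw [occ_seg0 hocc1 L (by omega), ← occ_seg0 hocc2 L (by omega),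
              show pre.length + 2 * ℓ = q2 * L from by omega, seg_block huni w q2 hq2lt]
          have hmod := sync hL huni hsf hwsq (w[q2]) _ (by omega) hocc1'
          rw [hiq, mod_eq_r hr1] at hmod
          omega
        · have hc1 : (pre.length + (L - r1)) % L = 0 := by
            rw [show pre.length + (L - r1) = (q1 + 1) * L from by
              rw [Nat.add_mul, one_mul]; omega]
            exact Nat.mul_mod_left _ _
          have hc2 : ((pre.length + 2 * ℓ) + (L - r2)) % L = 0 := by
            rw [show pre.length + 2 * ℓ + (L - r2) = (q2 + 1) * L from by
              rw [Nat.add_mul, one_mul]; omega]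
            exact Nat.mul_mod_left _ _
          have hne : L - r1 ≠ L - r2 := by omega
          rcases lt_or_gt_of_ne hne with hlt | hgt
          · exact NSCore hL huni hsf hwsq hx hlL hocc1 hocc2 (by omega) (by omega)
              hc1 hc2 (by omega) hlt (by omega)
          · exact NSCore hL huni hsf hwsq hx hlL hocc2 hocc1 (by omega) (by omega)
              hc2 hc1 (by omega) hgt (by omega)

end APAux

/-- Let `A` and `B` be alphabets with `|A| >= 3` and let `f` be a
square-free `L`-uniform morphism from `A*` to `B*`. Then `f` is a 3-anti-power
morphism iff it is a 3-anti-power morphism up to 5. -/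
theorem uniform_squareFree_three_antiPower_iff_up_to_five
    {A B : Type*} [Fintype A] (hA : 3 ≤ Fintype.card A)
    (f : A → List B) (L : ℕ) (hL : 1 ≤ L) (huni : ∀ a : A, (f a).length = L)
    (hsf : ∀ w : List A, SquareFree w → SquareFree (Morph.apply f w)) :
    (∀ w : List A, AntiPowerWord 3 w → AntiPowerWord 3 (Morph.apply f w)) ↔
      (∀ w : List A, w.length ≤ 5 → AntiPowerWord 3 w →
        AntiPowerWord 3 (Morph.apply f w)) := by
  constructor
  · exact fun h w _ hw => h w hw
  · intro H5 w hw3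
    rw [APAux.AP3_def]
    have hsq : SquareFree (Morph.apply f w) := hsf w (APAux.AP3_def.mp hw3).1
    refine ⟨hsq, ?_⟩
    intro ℓ h1 h2 u hu hlen
    have hflat : u = u.take ℓ ++ ((u.drop ℓ).take ℓ ++ u.drop (2 * ℓ)) := by
      rw [show 2 * ℓ = ℓ + ℓ from by ring, ← List.drop_drop, List.take_append_drop,
        List.take_append_drop]
    have hxl : (u.take ℓ).length = ℓ := by rw [List.length_take]; omega
    have hyl : ((u.drop ℓ).take ℓ).length = ℓ := by
      rw [List.length_take, List.length_drop]; omega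
    have hzl : (u.drop (2 * ℓ)).length = ℓ := by rw [List.length_drop]; omega
    refine ⟨[u.take ℓ, (u.drop ℓ).take ℓ, u.drop (2 * ℓ)], by simp, ?_, ?_, ?_⟩
    · intro z hz
      simp only [List.mem_cons, List.not_mem_nil, or_false] at hz
      rcases hz with h | h | h <;> subst h
      · exact hxl
      · exact hyl
      · exact hzl
    · -- pairwise distinct
      have h12 : u.take ℓ ≠ (u.drop ℓ).take ℓ := by
        intro he
        refine hsq (u.take ℓ) (by intro h0; rw [h0] at hxl; simp at hxl; omega) ?_
        have : u.take ℓ ++ u.take ℓ = u.take (ℓ + ℓ) := by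
          rw [List.take_add, ← he]
        rw [this]
        exact (List.take_prefix _ _).isInfix.trans hu
      have h23 : (u.drop ℓ).take ℓ ≠ u.drop (2 * ℓ) := by
        intro he
        refine hsq ((u.drop ℓ).take ℓ) (by intro h0; rw [h0] at hyl; simp at hyl; omega) ?_
        have : (u.drop ℓ).take ℓ ++ (u.drop ℓ).take ℓ = u.drop ℓ := by
          conv_rhs => rw [← List.take_append_drop ℓ (u.drop ℓ)]
          rw [List.drop_drop, show ℓ + ℓ = 2 * ℓ from by ring, ← he]
        rw [this]
        exact (List.drop_suffix _ _).isInfix.trans hu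
      have h13 : u.take ℓ ≠ u.drop (2 * ℓ) := by
        intro he
        rw [← he] at hflat
        have hxyx : u.take ℓ ++ (u.drop ℓ).take ℓ ++ u.take ℓ <:+: Morph.apply f w := by
          have heq2 : u.take ℓ ++ (u.drop ℓ).take ℓ ++ u.take ℓ = u := by
            rw [List.append_assoc]
            exact hflat.symm
          rw [heq2]
          exact hu
        exact absurd (APAux.xyx_false hA hL huni hsf H5 hw3 h1 hxl hyl hxyx) (by simp)
      simp only [List.pairwise_cons, List.mem_cons, List.not_mem_nil, or_false,
        List.mem_singleton, forall_eq_or_imp, forall_eq]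
      exact ⟨⟨h12, h13⟩, h23, fun _ h => h.elim, List.Pairwise.nil⟩
    · simpa using hflat
end

section
/- Let A and B be alphabets with |A| ≥ 3 and let f be an L-uniform morphism from A* to B*. If L is even, then f is not a 3-anti-power morphism. -/
lemma infix_eq {B : Type*} {u w : List B} (h : u <:+: w) :
    ∃ i, i + u.length ≤ w.length ∧ u = (w.drop i).take u.length := by
  obtain ⟨s, t, rfl⟩ := h
  refine ⟨s.length, by simp only [List.length_append]; omega, ?_⟩
  rw [show s ++ u ++ t = s ++ (u ++ t) by simp [List.append_assoc],
    List.drop_left, List.take_left]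

lemma abcab_apw {A : Type*} {a b c : A} (hab : a ≠ b) (hac : a ≠ c) (hbc : b ≠ c) :
    AntiPowerWord 3 [a, b, c, a, b] := by
  constructor
  · -- SquareFree
    intro u hu h
    obtain ⟨i, hi, he⟩ := infix_eq h
    rcases u with _ | ⟨x, _ | ⟨y, _ | ⟨z, u⟩⟩⟩
    · exact hu rfl
    · simp only [List.length_append, List.length_cons, List.length_nil] at hi he
      have hib : i ≤ 3 := by omega
      interval_cases i <;> simp at he <;> obtain ⟨rfl, he⟩ := he <;> simp_all
    · simp only [List.length_append, List.length_cons, List.length_nil] at hi he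
      have hib : i ≤ 1 := by omega
      interval_cases i <;> simp at he <;> obtain ⟨rfl, he⟩ := he <;> simp_all
    · simp only [List.length_append, List.length_cons, List.length_nil] at hi
      omega
  · intro ℓ h1 h2 u hu hlen
    have hℓ : ℓ = 1 := by simp at h2; omega
    subst hℓ
    obtain ⟨i, hi, he⟩ := infix_eq hu
    rw [hlen] at he hi
    simp only [List.length_cons, List.length_nil] at hi
    have hib : i ≤ 2 := by omega
    interval_cases i <;> simp only [List.drop, List.take] at he <;> subst he
    · exact ⟨[[a],[b],[c]], rfl, by simp, by simp [hab, hac, hbc, hab.symm, hac.symm, hbc.symm], by simp⟩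
    · exact ⟨[[b],[c],[a]], rfl, by simp, by simp [hab, hac, hbc, hab.symm, hac.symm, hbc.symm], by simp⟩
    · exact ⟨[[c],[a],[b]], rfl, by simp, by simp [hab, hac, hbc, hab.symm, hac.symm, hbc.symm], by simp⟩

/-- Let `A` and `B` be alphabets with `|A| >= 3` and let `f` be an
`L`-uniform morphism from `A*` to `B*`. If `L` is even, then `f` is not a
3-anti-power morphism. -/
theorem even_uniform_not_three_antiPower_morphism
    {A B : Type*} [Fintype A] (hA : 3 ≤ Fintype.card A)
    (f : A → List B) (L : ℕ) (hL : 1 ≤ L) (huni : ∀ a : A, (f a).length = L)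
    (hev : Even L) :
    ¬ (∀ w : List A, AntiPowerWord 3 w → AntiPowerWord 3 (Morph.apply f w)) := by
  intro H
  obtain ⟨m, rfl⟩ := hev
  have hm : 1 ≤ m := by omega
  obtain ⟨e⟩ : Nonempty (Fin 3 ↪ A) := by
    refine Function.Embedding.nonempty_of_card_le ?_
    simpa using hA
  set a := e 0
  set b := e 1
  set c := e 2
  have hab : a ≠ b := by simp [a, b, e.injective.ne_iff]
  have hac : a ≠ c := by simp [a, c, e.injective.ne_iff]
  have hbc : b ≠ c := by simp [b, c, e.injective.ne_iff]
  have hF := H [a, b, c, a, b] (abcab_apw hab hac hbc)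
  set F := Morph.apply f [a, b, c, a, b] with hFdef
  have e1 : F = (f a ++ f b ++ f c) ++ (f a ++ f b) := by
    simp [hFdef, Morph.apply]
  have hFlen : F.length = 10 * m := by
    rw [e1]; simp [huni]; ring
  -- the periodicity fact
  have e2 : F.drop (6 * m) = f a ++ f b := by
    rw [e1, show 6 * m = (f a ++ f b ++ f c).length by simp [huni]; ring,
      List.drop_left]
  have e3 : F.take (3 * m) = (F.drop (6 * m)).take (3 * m) := by
    rw [e2, e1, show (f a ++ f b ++ f c) ++ (f a ++ f b)
        = (f a ++ f b) ++ (f c ++ (f a ++ f b)) by simp [List.append_assoc]]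
    rw [List.take_append_of_le_length (by simp [huni]; omega)]
  obtain ⟨-, h2⟩ := hF
  have hseq := h2 (3 * m) (by omega) (by rw [hFlen]; norm_num; omega)
      (F.take (9 * m)) ((F.take_prefix (9 * m)).isInfix)
      (by rw [List.length_take, hFlen]; norm_num; omega)
  obtain ⟨l, hl3, hlens, hpw, hflat⟩ := hseq
  rcases l with _ | ⟨x, _ | ⟨y, _ | ⟨z, _ | _⟩⟩⟩ <;> simp at hl3
  have hx : x.length = 3 * m := hlens x (by simp)
  have hy : y.length = 3 * m := hlens y (by simp)
  have hxz : x ≠ z := by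
    simp [List.pairwise_cons] at hpw; tauto
  apply hxz
  have hxeq : x = F.take (3 * m) := by
    have : (F.take (9 * m)).take (3 * m) = x := by
      rw [hflat]
      simp only [List.flatten_cons, List.flatten_nil, List.append_nil]
      rw [show x ++ (y ++ z) = x ++ (y ++ z) from rfl, ← hx, List.take_left]
    rw [← this, List.take_take, min_eq_left (by omega)]
  have hzeq : z = (F.drop (6 * m)).take (3 * m) := by
    have : (F.take (9 * m)).drop (6 * m) = z := by
      rw [hflat]
      simp only [List.flatten_cons, List.flatten_nil, List.append_nil]
      rw [show x ++ (y ++ z) = (x ++ y) ++ z by simp [List.append_assoc],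
        show 6 * m = (x ++ y).length by simp [hx, hy]; ring, List.drop_left]
    rw [← this, List.drop_take]
    congr 1
    omega
  rw [hxeq, hzeq, e3]
end

section
/- Let f be a prefix morphism on an alphabet A, let u and v be words over A, let a and b be letters of A, and let p₁ be a prefix of f(a) and p₂ a prefix of f(b). If (p₁, p₂) ≠ (ε, f(b)) and (p₁, p₂) ≠ (f(a), ε), then the equality f(u)·p₁ = f(v)·p₂ implies u = v and p₁ = p₂. -/
lemma Morph.apply_nil {A B : Type*} (f : A → List B) :
    Morph.apply f ([] : List A) = [] := rfl

lemma Morph.apply_cons {A B : Type*} (f : A → List B) (c : A) (u : List A) :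
    Morph.apply f (c :: u) = f c ++ Morph.apply f u := by
  simp [Morph.apply]

/-- Let `f` be a prefix morphism (for distinct letters `a`, `b`,
`f a` is not a prefix of `f b`), let `p₁` be a prefix of `f a` and `p₂` a prefix
of `f b`. If `(p₁, p₂) ≠ (ε, f b)` and `(p₁, p₂) ≠ (f a, ε)`, then
`f(u) ++ p₁ = f(v) ++ p₂` implies `u = v` and `p₁ = p₂`. -/
theorem prefix_morphism_cancel
    {A B : Type*} (f : A → List B)
    (hpref : ∀ a b : A, a ≠ b → ¬ f a <+: f b)
    (u v : List A) (a b : A) (p₁ p₂ : List B)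
    (h₁ : p₁ <+: f a) (h₂ : p₂ <+: f b)
    (hne₁ : ¬ (p₁ = [] ∧ p₂ = f b))
    (hne₂ : ¬ (p₁ = f a ∧ p₂ = []))
    (heq : Morph.apply f u ++ p₁ = Morph.apply f v ++ p₂) :
    u = v ∧ p₁ = p₂ := by
  induction u generalizing v with
  | nil =>
    cases v with
    | nil =>
      simp only [Morph.apply_nil, List.nil_append] at heq
      exact ⟨rfl, heq⟩
    | cons c v' =>
      exfalso
      simp only [Morph.apply_nil, Morph.apply_cons, List.nil_append,
        List.append_assoc] at heq
      -- heq : p₁ = f c ++ (Morph.apply f v' ++ p₂)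
      have hfc : f c <+: p₁ := ⟨Morph.apply f v' ++ p₂, heq.symm⟩
      have hca : c = a := by
        by_contra hne
        exact hpref c a hne (hfc.trans h₁)
      subst hca
      have hlen : p₁.length ≤ (f c).length := h₁.length_le
      have hlen2 : p₁.length = (f c).length + (Morph.apply f v' ++ p₂).length := by
        rw [heq]; simp
      have hz : (Morph.apply f v' ++ p₂).length = 0 := by omega
      have hp2 : p₂ = [] := by
        simp only [List.length_append] at hz
        exact List.eq_nil_of_length_eq_zero (by omega)
      have hrest : Morph.apply f v' ++ p₂ = [] := List.eq_nil_of_length_eq_zero hz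
      have hp1 : p₁ = f c := by rw [heq, hrest, List.append_nil]
      exact hne₂ ⟨hp1, hp2⟩
  | cons c u' ih =>
    cases v with
    | nil =>
      exfalso
      simp only [Morph.apply_nil, Morph.apply_cons, List.nil_append,
        List.append_assoc] at heq
      -- heq : f c ++ (Morph.apply f u' ++ p₁) = p₂
      have hfc : f c <+: p₂ := ⟨Morph.apply f u' ++ p₁, heq⟩
      have hcb : c = b := by
        by_contra hne
        exact hpref c b hne (hfc.trans h₂)
      subst hcb
      have hlen : p₂.length ≤ (f c).length := h₂.length_le
      have hlen2 : p₂.length = (f c).length + (Morph.apply f u' ++ p₁).length := by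
        rw [← heq]; simp
      have hz : (Morph.apply f u' ++ p₁).length = 0 := by omega
      have hp1 : p₁ = [] := by
        simp only [List.length_append] at hz
        exact List.eq_nil_of_length_eq_zero (by omega)
      have hrest : Morph.apply f u' ++ p₁ = [] := List.eq_nil_of_length_eq_zero hz
      have hp2 : p₂ = f c := by rw [← heq, hrest, List.append_nil]
      exact hne₁ ⟨hp1, hp2⟩
    | cons d v' =>
      simp only [Morph.apply_cons, List.append_assoc] at heq
      have hcd : c = d := by
        by_contra hne
        have hc : f c <+: f c ++ (Morph.apply f u' ++ p₁) := List.prefix_append _ _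
        have hd : f d <+: f c ++ (Morph.apply f u' ++ p₁) :=
          heq ▸ List.prefix_append _ _
        rcases le_total (f c).length (f d).length with hle | hle
        · exact hpref c d hne (List.prefix_of_prefix_length_le hc hd hle)
        · exact hpref d c (Ne.symm hne) (List.prefix_of_prefix_length_le hd hc hle)
      subst hcd
      have heq' : Morph.apply f u' ++ p₁ = Morph.apply f v' ++ p₂ :=
        List.append_cancel_left heq
      obtain ⟨h1, h2⟩ := ih v' heq'
      exact ⟨by rw [h1], h2⟩
end

section
/- Let f be a suffix morphism on an alphabet A, let u and v be words over A, let a and b be letters of A, and let s₁ be a suffix of f(a) and s₂ a suffix of f(b). If (s₁, s₂) ≠ (ε, f(b)) and (s₁, s₂) ≠ (f(a), ε), then the equality s₁·f(u) = s₂·f(v) implies u = v and s₁ = s₂. -/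
lemma Morph.apply_concat {A B : Type*} (f : A → List B) (u : List A) (c : A) :
    Morph.apply f (u ++ [c]) = Morph.apply f u ++ f c := by
  simp [Morph.apply]

/-- Let `f` be a suffix morphism (for distinct letters `a`, `b`,
`f a` is not a suffix of `f b`), let `s₁` be a suffix of `f a` and `s₂` a suffix
of `f b`. If `(s₁, s₂) ≠ (ε, f b)` and `(s₁, s₂) ≠ (f a, ε)`, then
`s₁ ++ f(u) = s₂ ++ f(v)` implies `u = v` and `s₁ = s₂`. -/
theorem suffix_morphism_cancel
    {A B : Type*} (f : A → List B)
    (hsuff : ∀ a b : A, a ≠ b → ¬ f a <:+ f b)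
    (u v : List A) (a b : A) (s₁ s₂ : List B)
    (h₁ : s₁ <:+ f a) (h₂ : s₂ <:+ f b)
    (hne₁ : ¬ (s₁ = [] ∧ s₂ = f b))
    (hne₂ : ¬ (s₁ = f a ∧ s₂ = []))
    (heq : s₁ ++ Morph.apply f u = s₂ ++ Morph.apply f v) :
    u = v ∧ s₁ = s₂ := by
  classical
  induction u using List.reverseRecOn generalizing v with
  | nil =>
    rcases List.eq_nil_or_concat v with rfl | ⟨v', d, rfl⟩ <;> [skip; rw [List.concat_eq_append] at heq ⊢]
    · simp only [Morph.apply, List.map_nil, List.flatten_nil, List.append_nil] at heq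
      exact ⟨rfl, heq⟩
    · exfalso
      rw [Morph.apply_concat] at heq
      simp only [Morph.apply, List.map_nil, List.flatten_nil, List.append_nil,
        ← List.append_assoc] at heq
      -- heq : s₁ = (s₂ ++ Morph.apply f v') ++ f d
      have hfd : f d <:+ f a := List.IsSuffix.trans ⟨s₂ ++ Morph.apply f v', heq.symm⟩ h₁
      by_cases hda : d = a
      · subst hda
        have hs₁ : s₁ = f d := List.Sublist.antisymm h₁.sublist (List.IsSuffix.sublist (heq ▸ ⟨s₂ ++ Morph.apply f v', rfl⟩))
        have : s₂ ++ Morph.apply f v' = ([] : List B) := by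
          apply List.append_cancel_right (bs := f d)
          simp only [Morph.apply]
          rw [← heq, hs₁, List.nil_append]
        exact hne₂ ⟨hs₁, List.append_eq_nil_iff.mp this |>.1⟩
      · exact hsuff d a hda hfd
  | append_singleton u' c ih =>
    rcases List.eq_nil_or_concat v with rfl | ⟨v', d, rfl⟩ <;> [skip; rw [List.concat_eq_append] at heq ⊢]
    · exfalso
      rw [Morph.apply_concat] at heq
      simp only [Morph.apply, List.map_nil, List.flatten_nil, List.append_nil,
        ← List.append_assoc] at heq
      -- heq : (s₁ ++ Morph.apply f u') ++ f c = s₂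
      have hfc : f c <:+ f b := List.IsSuffix.trans ⟨s₁ ++ Morph.apply f u', heq⟩ h₂
      by_cases hcb : c = b
      · subst hcb
        have hs₂ : s₂ = f c := List.Sublist.antisymm h₂.sublist (List.IsSuffix.sublist ⟨s₁ ++ Morph.apply f u', heq⟩)
        have : s₁ ++ Morph.apply f u' = ([] : List B) := by
          apply List.append_cancel_right (bs := f c)
          simp only [Morph.apply]
          rw [heq, hs₂, List.nil_append]
        exact hne₁ ⟨List.append_eq_nil_iff.mp this |>.1, hs₂⟩
      · exact hsuff c b hcb hfc
    · rw [Morph.apply_concat, Morph.apply_concat, ← List.append_assoc,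
        ← List.append_assoc] at heq
      have hcd : c = d := by
        by_contra hcd
        have h1 : f c <:+ (s₂ ++ Morph.apply f v') ++ f d := ⟨_, heq⟩
        have h2 : f d <:+ (s₂ ++ Morph.apply f v') ++ f d := ⟨_, rfl⟩
        rcases List.suffix_or_suffix_of_suffix h1 h2 with h | h
        · exact hsuff c d hcd h
        · exact hsuff d c (Ne.symm hcd) h
      subst hcd
      have heq' : s₁ ++ Morph.apply f u' = s₂ ++ Morph.apply f v' :=
        List.append_cancel_right heq
      obtain ⟨huv, hs⟩ := ih v' heq'
      exact ⟨by rw [huv], hs⟩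
end

section
/- If a non-empty word v is an internal factor of vv, i.e., if there exist two non-empty words x and y such that vv = x·v·y, then there exist a non-empty word t and two integers i, j ≥ 1 such that x = t^i, y = t^j, and v = t^(i+j). -/
private lemma comm_words {B : Type*} :
    ∀ n (x y : List B), x.length + y.length ≤ n → x ≠ [] → y ≠ [] →
    x ++ y = y ++ x →
    ∃ t : List B, t ≠ [] ∧ ∃ i j : ℕ, 1 ≤ i ∧ 1 ≤ j ∧
      x = (List.replicate i t).flatten ∧ y = (List.replicate j t).flatten := by
  intro n
  induction n with
  | zero =>
    intro x y hn hx hy _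
    exfalso
    have : x.length ≠ 0 := fun h => hx (List.length_eq_zero_iff.mp h)
    omega
  | succ n ih =>
    intro x y hn hx hy hcomm
    rcases List.append_eq_append_iff.mp hcomm with ⟨a, ha1, ha2⟩ | ⟨a, ha1, ha2⟩
    ·
      by_cases hae : a = []
      · subst hae
        refine ⟨x, hx, 1, 1, le_refl 1, le_refl 1, by simp, ?_⟩
        simp [ha1]
      · have hxa : x ++ a = a ++ x := by
          have := ha1.symm.trans ha2
          exact this
        have hlen : x.length + a.length ≤ n := by
          have hy' : y.length = x.length + a.length := by
            rw [ha1]; simp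
          have : 0 < x.length := List.length_pos_iff.mpr hx
          omega
        obtain ⟨t, ht, i, j, hi, hj, hxt, hat⟩ := ih x a hlen hx hae hxa
        refine ⟨t, ht, i, i + j, hi, by omega, hxt, ?_⟩
        rw [ha1, hxt, hat, List.replicate_add, List.flatten_append]
    · by_cases hae : a = []
      · subst hae
        refine ⟨y, hy, 1, 1, le_refl 1, le_refl 1, ?_, by simp⟩
        simp [ha1]
      · have hya : y ++ a = a ++ y := by
          exact ha1.symm.trans ha2
        have hlen : y.length + a.length ≤ n := by
          have hx' : x.length = y.length + a.length := by
            rw [ha1]; simp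
          have : 0 < y.length := List.length_pos_iff.mpr hy
          omega
        obtain ⟨t, ht, i, j, hi, hj, hyt, hat⟩ := ih y a hlen hy hae hya
        refine ⟨t, ht, i + j, i, by omega, hi, ?_, hyt⟩
        rw [ha1, hyt, hat, List.replicate_add, List.flatten_append]

/-- If a non-empty word `v` is an internal factor of `vv`, i.e.
`vv = x ++ v ++ y` with `x`, `y` non-empty, then there exist a non-empty word `t`
and integers `i, j ≥ 1` such that `x = t^i`, `y = t^j` and `v = t^(i+j)`. -/
theorem internal_factor_of_square
    {B : Type*} (v x y : List B) (hv : v ≠ []) (hx : x ≠ []) (hy : y ≠ [])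
    (h : v ++ v = x ++ v ++ y) :
    ∃ t : List B, t ≠ [] ∧ ∃ i j : ℕ, 1 ≤ i ∧ 1 ≤ j ∧
      x = (List.replicate i t).flatten ∧ y = (List.replicate j t).flatten ∧
      v = (List.replicate (i + j) t).flatten := by
  have hlen : v.length = x.length + y.length := by
    have := congrArg List.length h
    simp at this
    omega
  have hxlen : x.length ≤ v.length := by
    have : 0 < y.length := List.length_pos_iff.mpr hy
    omega
  -- x is the prefix of v of length |x|
  have hxv : x = v.take x.length := by
    have h1 := congrArg (List.take x.length) h
    rw [List.append_assoc, List.take_left, List.take_append_of_le_length hxlen] at h1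
    exact h1.symm
  -- y is the suffix of v, i.e. y = v.drop |x|
  have hyv : y = v.drop x.length := by
    have h1 := congrArg (List.drop (v.length + x.length)) h
    rw [show v.length + x.length = v.length + x.length from rfl] at h1
    have hL : (v ++ v).drop (v.length + x.length) = v.drop x.length := by
      rw [List.drop_append]
      simp
    have hR : (x ++ v ++ y).drop (v.length + x.length) = y := by
      have he : v.length + x.length = (x ++ v).length := by simp [Nat.add_comm]
      rw [he, List.drop_left]
    rw [hL, hR] at h1
    exact h1.symm
  have hv_eq : v = x ++ y := by
    conv_lhs => rw [← List.take_append_drop x.length v]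
    rw [← hxv, ← hyv]
  -- derive commutation
  have hcomm : x ++ y = y ++ x := by
    have h' := h
    rw [hv_eq] at h'
    have h1 : y ++ (x ++ y) = x ++ (y ++ y) := by
      apply List.append_cancel_left (as := x)
      simpa [List.append_assoc] using h'
    have h2 : (y ++ x) ++ y = (x ++ y) ++ y := by
      simpa [List.append_assoc] using h1
    exact (List.append_cancel_right h2).symm
  obtain ⟨t, ht, i, j, hi, hj, hxt, hyt⟩ :=
    comm_words (x.length + y.length) x y le_rfl hx hy hcomm
  refine ⟨t, ht, i, j, hi, hj, hxt, hyt, ?_⟩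
  rw [hv_eq, hxt, hyt, List.replicate_add, List.flatten_append]
end

section
/- Let k ≥ 2 be an integer. If a word w contains a factor that is the concatenation of k consecutive factors of the same length n ≥ 1 among which at least two are equal, then w contains a factor that is an ℓ-power for some rational ℓ ≥ k/(k-1), i.e., w contains a factor of the form (xy)^α·x with xy non-empty and α + |x|/|xy| ≥ k/(k-1). -/
/-!
If blocks `i < j` of the factorisation coincide, say both equal `x`, then blocks `i, …, j - 1`
followed by block `j` read `x y x`, where `x y` consists of `j - i` blocks. This is a
`(1 + 1/(j - i))`-power, and `j - i ≤ k - 1` gives `1 + 1/(j - i) ≥ 1 + 1/(k - 1) = k/(k - 1)`.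
-/

namespace List

variable {α : Type*}

theorem length_flatten_of_forall_length_eq {L : List (List α)} {n : ℕ}
    (h : ∀ v ∈ L, v.length = n) : L.flatten.length = L.length * n := by
  rw [length_flatten, map_congr_left h, map_const', sum_replicate, smul_eq_mul]

theorem take_drop_infix (l : List α) (i m : ℕ) : (l.drop i).take m <:+: l :=
  (take_prefix m _).isInfix.trans (drop_suffix i l).isInfix

theorem exists_append_append_infix_flatten {l : List (List α)} {i j : ℕ} (hij : i < j)
    (hj : j < l.length) (heq : l[i] = l[j]) :
    ∃ y, l[i] ++ y = ((l.drop i).take (j - i)).flatten ∧ l[i] ++ y ++ l[i] <:+: l.flatten := by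
  obtain ⟨d, hd⟩ : ∃ d, j - i = d + 1 := ⟨j - i - 1, by omega⟩
  have hhead : (l.drop i).take (j - i) = l[i] :: (l.drop (i + 1)).take d := by
    rw [hd, drop_eq_getElem_cons, take_succ_cons]
  have hlast : (l.drop i).take (j - i + 1) = (l.drop i).take (j - i) ++ [l[j]] := by
    rw [take_add_one, getElem?_drop, Nat.add_sub_cancel' hij.le, getElem?_eq_getElem hj]
    rfl
  refine ⟨((l.drop (i + 1)).take d).flatten, by rw [hhead, flatten_cons], ?_⟩
  have := (take_drop_infix l i (j - i + 1)).flatten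
  rwa [hlast, flatten_append, ← heq, hhead, flatten_cons, flatten_singleton] at this

end List

theorem div_sub_one_le_one_add_inv {k d : ℕ} (hd : 0 < d) (hdk : d < k) :
    (k : ℚ) / (k - 1) ≤ 1 + (d : ℚ)⁻¹ := by
  have hdk' : (d : ℚ) ≤ k - 1 := by
    rw [le_sub_iff_add_le]; exact_mod_cast hdk
  have hd' : (0 : ℚ) < d := by exact_mod_cast hd
  calc (k : ℚ) / (k - 1) = 1 + ((k : ℚ) - 1)⁻¹ := by
        field_simp [(hd'.trans_le hdk').ne']; ring
    _ ≤ 1 + (d : ℚ)⁻¹ := by gcongr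

theorem repeated_block_gives_fractional_power_general
    {A : Type*} (k n : ℕ) (hn : 1 ≤ n) (w u : List A)
    (hu : u <:+: w) (l : List (List A)) (hlk : l.length = k)
    (hln : ∀ v ∈ l, v.length = n) (hjoin : u = l.flatten)
    (hrep : ∃ i j : Fin l.length, i < j ∧ l.get i = l.get j) :
    ∃ (x y : List A) (α : ℕ), x ++ y ≠ [] ∧
      ((List.replicate α (x ++ y)).flatten ++ x) <:+: w ∧
      (k : ℚ) / ((k : ℚ) - 1) ≤ (α : ℚ) + (x.length : ℚ) / ((x ++ y).length : ℚ) := by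
  obtain ⟨⟨i, hi⟩, ⟨j, hj⟩, hij, heq⟩ := hrep
  rw [Fin.mk_lt_mk] at hij
  obtain ⟨y, hxy, hinfix⟩ := List.exists_append_append_infix_flatten (l := l) hij hj heq
  have hxy_length : (l[i] ++ y).length = (j - i) * n := by
    rw [hxy, List.length_flatten_of_forall_length_eq
      fun v hv ↦ hln v ((List.take_drop_infix l i _).subset hv), List.length_take, List.length_drop,
      Nat.min_eq_left (by omega)]
  refine ⟨l[i], y, 1, ?_, ?_, ?_⟩
  · rw [← List.length_pos_iff, hxy_length]
    exact Nat.mul_pos (Nat.sub_pos_of_lt hij) hn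
  · simpa only [List.replicate_one, List.flatten_singleton] using hinfix.trans (hjoin ▸ hu)
  · rw [hxy_length, hln _ (List.getElem_mem _), Nat.cast_mul, Nat.cast_one,
      div_mul_cancel_right₀ (by positivity)]
    exact div_sub_one_le_one_add_inv (Nat.sub_pos_of_lt hij) (by omega)

/-- Let `k ≥ 2`. If a word `w` contains a factor `u` that is a
concatenation of `k` consecutive factors of the same length `n ≥ 1` among which
at least two are equal, then `w` contains a factor of the form `(xy)^α ++ x`
with `xy` non-empty and `α + |x|/|xy| ≥ k/(k-1)`. -/
theorem repeated_block_gives_fractional_power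
    {A : Type*} (k n : ℕ) (hk : 2 ≤ k) (hn : 1 ≤ n) (w u : List A)
    (hu : u <:+: w) (l : List (List A)) (hlk : l.length = k)
    (hln : ∀ v ∈ l, v.length = n) (hjoin : u = l.flatten)
    (hrep : ∃ i j : Fin l.length, i < j ∧ l.get i = l.get j) :
    ∃ (x y : List A) (α : ℕ), x ++ y ≠ [] ∧
      ((List.replicate α (x ++ y)).flatten ++ x) <:+: w ∧
      (k : ℚ) / ((k : ℚ) - 1) ≤ (α : ℚ) + (x.length : ℚ) / ((x ++ y).length : ℚ) :=
  repeated_block_gives_fractional_power_general k n hn w u hu l hlk hln hjoin hrep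
end

section
/- Over a two-letter alphabet {a, b}, for every integer k ≥ 3, the only k-anti-power words are a, b, ab, and ba; in particular, every k-anti-power word over a two-letter alphabet has length at most 2. -/
lemma apw_down {B : Type*} {w : List B} : ∀ k, 3 ≤ k → AntiPowerWord k w → AntiPowerWord 3 w
  | 0, h => by omega
  | 1, h => by omega
  | 2, h => by omega
  | 3, _ => fun h => h
  | (m + 4), _ => fun h => apw_down (m + 3) (by omega) h.1

lemma apw_sf {B : Type*} {w : List B} {k : ℕ} (hk : 3 ≤ k) (h : AntiPowerWord k w) :
    SquareFree w := (apw_down k hk h).1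

lemma apw_of_short {B : Type*} {w : List B} (hsf : SquareFree w) (hlen : w.length ≤ 2) :
    ∀ k, AntiPowerWord k w
  | 0 => trivial
  | 1 => trivial
  | 2 => hsf
  | (m + 3) => ⟨apw_of_short hsf hlen (m + 2), by
      intro ℓ h1 h2 u _ _
      exfalso
      have : w.length / (m + 3) = 0 := Nat.div_eq_of_lt (by omega)
      omega⟩

lemma not_apw3_of_long {A : Type*} (a b : A) (hA : ∀ c : A, c = a ∨ c = b)
    {w : List A} (hlen : 3 ≤ w.length) : ¬ AntiPowerWord 3 w := by
  intro h
  have hd : (1:ℕ) ≤ w.length / (0 + 3) := by omega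
  have hu : (w.take 3).length = (0 + 3) * 1 := by rw [List.length_take]; omega
  have h2 := h.2 1 le_rfl hd (w.take 3) (w.take_prefix 3).isInfix hu
  obtain ⟨l, hl3, hmem, hpw, _⟩ := h2
  obtain ⟨x, y, z, rfl⟩ := List.length_eq_three.mp hl3
  obtain ⟨cx, rfl⟩ := List.length_eq_one_iff.mp (hmem x (by simp))
  obtain ⟨cy, rfl⟩ := List.length_eq_one_iff.mp (hmem y (by simp))
  obtain ⟨cz, rfl⟩ := List.length_eq_one_iff.mp (hmem z (by simp))
  simp only [List.pairwise_cons, List.mem_cons] at hpw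
  rcases hA cx with rfl | rfl <;> rcases hA cy with h1 | h1 <;> rcases hA cz with h2 | h2 <;>
    subst h1 <;> subst h2 <;> simp_all

lemma sf_single {A : Type*} (c : A) : SquareFree [c] := by
  intro u hu hinf
  have h1 := hinf.length_le
  have h2 : 1 ≤ u.length := List.length_pos_iff.mpr hu
  simp at h1; omega

lemma sf_pair {A : Type*} {c d : A} (h : c ≠ d) : SquareFree [c, d] := by
  intro u hu hinf
  have h1 := hinf.length_le
  have h2 : 1 ≤ u.length := List.length_pos_iff.mpr hu
  simp at h1
  have hu1 : u.length = 1 := by omega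
  obtain ⟨x, rfl⟩ := List.length_eq_one_iff.mp hu1
  have : [x, x] = [c, d] := hinf.eq_of_length (by simp)
  simp at this
  exact h (this.1.symm.trans this.2)

/-- Over a two-letter alphabet `{a, b}`, for every `k ≥ 3` the
only (non-empty) `k`-anti-power words are `a`, `b`, `ab` and `ba`; in particular
every `k`-anti-power word has length at most `2`. -/
theorem antiPower_two_letters
    {A : Type*} (a b : A) (hab : a ≠ b) (hA : ∀ c : A, c = a ∨ c = b)
    (k : ℕ) (hk : 3 ≤ k) :
    ∀ w : List A,
      (w ≠ [] →
        (AntiPowerWord k w ↔ (w = [a] ∨ w = [b] ∨ w = [a, b] ∨ w = [b, a]))) ∧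
      (AntiPowerWord k w → w.length ≤ 2) := by
  intro w
  have hlen : AntiPowerWord k w → w.length ≤ 2 := by
    intro h
    by_contra hl
    exact not_apw3_of_long a b hA (by omega) (apw_down k hk h)
  refine ⟨fun hne => ⟨fun h => ?_, fun h => ?_⟩, hlen⟩
  · have hsf := apw_sf hk h
    have hl2 := hlen h
    match w, hne, hsf, hl2 with
    | [c], _, _, _ =>
      rcases hA c with rfl | rfl
      · exact Or.inl rfl
      · exact Or.inr (Or.inl rfl)
    | [c, d], _, hsf, _ =>
      have hcd : c ≠ d := by
        intro hcd
        subst hcd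
        exact hsf [c] (by simp) (List.infix_rfl)
      rcases hA c with rfl | rfl <;> rcases hA d with rfl | rfl <;> simp_all
  · rcases h with rfl | rfl | rfl | rfl
    · exact apw_of_short (sf_single a) (by simp) k
    · exact apw_of_short (sf_single b) (by simp) k
    · exact apw_of_short (sf_pair hab) (by simp) k
    · exact apw_of_short (sf_pair hab.symm) (by simp) k
end

section
/- Over a three-letter alphabet {a, b, c}, the only 3-anti-power words are the word abcab, the words obtained from abcab by permuting the letters, and the factors of these words; in particular, every 3-anti-power word over a three-letter alphabet has length at most 5. -/
theorem List.eq_map_singleton_flatten {B : Type*} {l : List (List B)}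
    (hl : ∀ u ∈ l, u.length = 1) : l = l.flatten.map ([·]) := by
  induction l with
  | nil => rfl
  | cons u l ih =>
    obtain ⟨x, rfl⟩ := List.length_eq_one_iff.mp (hl u List.mem_cons_self)
    simpa using ih fun v hv => hl v (List.mem_cons_of_mem _ hv)

section Words

variable {B : Type*} {k : ℕ} {v w : List B}

theorem antiPowerSeq_one_iff : AntiPowerSeq k 1 w ↔ w.length = k ∧ w.Nodup := by
  have flatten_map_singleton (v : List B) : (v.map ([·])).flatten = v := by
    simp [← List.flatMap_def]
  constructor
  · rintro ⟨l, rfl, hl, hpw, rfl⟩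
    obtain ⟨v, rfl⟩ : ∃ v : List B, l = v.map ([·]) := ⟨_, List.eq_map_singleton_flatten hl⟩
    simp only [flatten_map_singleton, List.length_map, true_and]
    exact List.pairwise_map.mp hpw |>.imp fun h e => h (congrArg ([·]) e)
  · rintro ⟨rfl, hw⟩
    refine ⟨w.map ([·]), List.length_map _, by simp, ?_, (flatten_map_singleton w).symm⟩
    exact List.pairwise_map.mpr (hw.imp fun h e => h (List.singleton_injective e))

def FactorsNodup (k : ℕ) (w : List B) : Prop :=
  ∀ u : List B, u <:+: w → u.length = k → u.Nodup

theorem SquareFree.infix (hw : SquareFree w) (hvw : v <:+: w) : SquareFree v :=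
  fun u hu huv => hw u hu (huv.trans hvw)

theorem FactorsNodup.infix (hw : FactorsNodup k w) (hvw : v <:+: w) : FactorsNodup k v :=
  fun u huv hu => hw u (huv.trans hvw) hu

theorem AntiPowerWord.squareFree (hw : AntiPowerWord 3 w) : SquareFree w := hw.1

theorem AntiPowerWord.factorsNodup (hw : AntiPowerWord 3 w) : FactorsNodup 3 w := by
  intro u hu hlen
  have h3 : 3 ≤ w.length := hlen ▸ hu.length_le
  exact (antiPowerSeq_one_iff.mp (hw.2 1 le_rfl (by simp only [Nat.zero_add]; omega) u hu hlen)).2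

theorem antiPowerWord_three_of_length_le_five (hlen : w.length ≤ 5) (hsf : SquareFree w)
    (hf : FactorsNodup 3 w) : AntiPowerWord 3 w := by
  refine ⟨hsf, fun ℓ hℓ hℓw u hu hulen => ?_⟩
  simp only [Nat.zero_add] at hℓw
  obtain rfl : ℓ = 1 := by omega
  exact antiPowerSeq_one_iff.mpr ⟨hulen, hf u hu hulen⟩

end Words

section ThreeLetters

variable {A : Type*} {L : List A}

theorem eq_of_nodup_of_ne_of_ne (hL : ∀ x, x ∈ L) (hL3 : L.length ≤ 3) {p q r s : A}
    (hpqr : [p, q, r].Nodup) (hsq : s ≠ q) (hsr : s ≠ r) : s = p := by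
  by_contra hsp
  have hn : [p, q, r, s].Nodup := by simp_all [eq_comm]
  have := (hn.subperm fun x _ => hL x).length_le
  simp only [List.length_cons, List.length_nil] at this
  omega

theorem FactorsNodup.fourth_eq_first (hL : ∀ x, x ∈ L) (hL3 : L.length ≤ 3) {p q r s : A}
    {w : List A} (hw : FactorsNodup 3 (p :: q :: r :: s :: w)) : s = p := by
  have hpqr := hw [p, q, r] ⟨[], s :: w, rfl⟩ rfl
  have hqrs := hw [q, r, s] ⟨[p], w, rfl⟩ rfl
  obtain ⟨⟨-, hqs⟩, hrs⟩ : (q ≠ r ∧ q ≠ s) ∧ r ≠ s := by simpa using hqrs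
  exact eq_of_nodup_of_ne_of_ne hL hL3 hpqr hqs.symm hrs.symm

theorem length_le_five_of_squareFree (hL : ∀ x, x ∈ L) (hL3 : L.length ≤ 3) {w : List A}
    (hsf : SquareFree w) (hf : FactorsNodup 3 w) : w.length ≤ 5 := by
  by_contra! hlong
  rcases w with _ | ⟨x0, _ | ⟨x1, _ | ⟨x2, _ | ⟨x3, _ | ⟨x4, _ | ⟨x5, rest⟩⟩⟩⟩⟩⟩ <;>
    simp only [List.length_cons, List.length_nil] at hlong <;> try omega
  have hf1 := hf.infix (List.suffix_cons x0 _).isInfix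
  have hf2 := hf1.infix (List.suffix_cons x1 _).isInfix
  have h3 := hf.fourth_eq_first hL hL3
  have h4 := hf1.fourth_eq_first hL hL3
  have h5 := hf2.fourth_eq_first hL hL3
  subst x3 x4 x5
  exact hsf [x0, x1, x2] (List.cons_ne_nil _ _) ⟨[], rest, rfl⟩

theorem exists_nodup_prefix_of_nodup (hL : ∀ x, x ∈ L) (hLn : L.Nodup)
    {v : List A} (hv : v.Nodup) : ∃ l : List A, l.Nodup ∧ l.length = L.length ∧ v <+: l := by
  classical
  have hn : (v ++ L.filter (· ∉ v)).Nodup :=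
    hv.append (hLn.filter _) fun x hxv hxL => by simp_all
  refine ⟨_, hn, ?_, List.prefix_append _ _⟩
  refine ((List.perm_ext_iff_of_nodup hn hLn).mpr fun x => ?_).length_eq
  by_cases hx : x ∈ v <;> simp [hx, hL]

theorem exists_prefix_of_squareFree (hL : ∀ x, x ∈ L) (hLn : L.Nodup) (hL3 : L.length = 3)
    {w : List A} (hsf : SquareFree w) (hf : FactorsNodup 3 w) :
    ∃ l : List A, l.Nodup ∧ l.length = 3 ∧ w <+: l ++ l.take 2 := by
  have hlen := length_le_five_of_squareFree hL hL3.le hsf hf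
  have extend (v : List A) (hv : v.Nodup) :
      ∃ l : List A, l.Nodup ∧ l.length = 3 ∧ v <+: l ++ l.take 2 := by
    obtain ⟨l, hl, hlL, hvl⟩ := exists_nodup_prefix_of_nodup hL hLn hv
    exact ⟨l, hl, hlL.trans hL3, hvl.trans (List.prefix_append _ _)⟩
  rcases w with _ | ⟨p, _ | ⟨q, _ | ⟨r, rest⟩⟩⟩
  · exact extend [] List.nodup_nil
  · exact extend [p] (List.nodup_singleton p)
  · have hpq : p ≠ q := fun h => hsf [p] (List.cons_ne_nil _ _) ⟨[], [], by rw [h]; rfl⟩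
    exact extend [p, q] (by simpa using hpq)
  refine ⟨[p, q, r], hf _ ⟨[], rest, rfl⟩ rfl, rfl, ?_⟩
  rcases rest with _ | ⟨s, _ | ⟨t, _ | ⟨u, rest⟩⟩⟩
  · exact ⟨[p, q], rfl⟩
  · have hs := hf.fourth_eq_first hL hL3.le
    subst s
    exact ⟨[q], rfl⟩
  · have hs := hf.fourth_eq_first hL hL3.le
    have ht := (hf.infix (List.suffix_cons p _).isInfix).fourth_eq_first hL hL3.le
    subst s t
    exact ⟨[], rfl⟩
  · simp only [List.length_cons] at hlen
    omega

theorem exists_perm_map_eq {l₁ l₂ : List A} (hl₁ : ∀ x, x ∈ l₁) (h₁ : l₁.Nodup) (h₂ : l₂.Nodup)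
    (hlen : l₂.length = l₁.length) : ∃ σ : Equiv.Perm A, l₁.map σ = l₂ := by
  classical
  have hl₂ (x : A) : x ∈ l₂ :=
    ((h₂.subperm fun y _ => hl₁ y).perm_of_length_le hlen.ge).mem_iff.mpr (hl₁ x)
  let e₁ := h₁.getEquivOfForallMemList _ hl₁
  let e₂ := h₂.getEquivOfForallMemList _ hl₂
  refine ⟨e₁.symm.trans ((finCongr hlen.symm).trans e₂), List.ext_getElem (by simp [hlen]) ?_⟩
  intro i hi₁ hi₂
  have : e₁.symm l₁[i] = ⟨i, by simpa using hi₁⟩ := e₁.symm_apply_eq.mpr rfl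
  simp [this, e₂]

theorem squareFree_xyzxy {x y z : A} (h : [x, y, z].Nodup) : SquareFree [x, y, z, x, y] := by
  simp only [List.nodup_cons, List.mem_cons, not_or] at h
  intro u hu huu
  have hlen := huu.length_le
  simp only [List.infix_cons_iff, List.prefix_cons_iff, List.infix_nil, List.prefix_nil] at huu
  rcases u with _ | ⟨p, _ | ⟨q, _ | ⟨r, u⟩⟩⟩
  · exact hu rfl
  · aesop
  · aesop
  · simp only [List.length_append, List.length_cons, List.length_nil] at hlen
    omega

theorem factorsNodup_xyzxy {x y z : A} (h : [x, y, z].Nodup) : FactorsNodup 3 [x, y, z, x, y] := by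
  simp only [List.nodup_cons, List.mem_cons, not_or] at h
  intro u hu hlen
  simp only [List.infix_cons_iff, List.prefix_cons_iff, List.infix_nil, List.prefix_nil] at hu
  aesop

end ThreeLetters

/-- Over a three-letter alphabet `{a, b, c}`, the only
3-anti-power words are `abcab`, the words obtained from it by permuting the
letters, and the factors of these words; in particular every 3-anti-power word
has length at most `5`. -/
theorem antiPower_three_letters
    {A : Type*} (a b c : A) (hab : a ≠ b) (hac : a ≠ c) (hbc : b ≠ c)
    (hA : ∀ x : A, x = a ∨ x = b ∨ x = c) :
    ∀ w : List A,
      (AntiPowerWord 3 w ↔ ∃ σ : Equiv.Perm A, w <:+: ([a, b, c, a, b].map σ)) ∧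
      (AntiPowerWord 3 w → w.length ≤ 5) := by
  have hL : ∀ x, x ∈ [a, b, c] := by simpa using hA
  have hLn : [a, b, c].Nodup := by simp [hab, hac, hbc]
  refine fun w => ⟨⟨fun hw => ?_, fun ⟨σ, hw⟩ => ?_⟩,
    fun hw => length_le_five_of_squareFree hL le_rfl hw.squareFree hw.factorsNodup⟩
  · obtain ⟨l, hl, hl3, hwl⟩ := exists_prefix_of_squareFree hL hLn rfl hw.squareFree hw.factorsNodup
    obtain ⟨σ, rfl⟩ := exists_perm_map_eq hL hLn hl hl3
    exact ⟨σ, hwl.isInfix⟩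
  · have hσ : [σ a, σ b, σ c].Nodup := hLn.map σ.injective
    exact antiPowerWord_three_of_length_le_five (by simpa using hw.length_le)
      ((squareFree_xyzxy hσ).infix hw) ((factorsNodup_xyzxy hσ).infix hw)
end

section
/- Let f be a non-erasing 3-anti-power morphism on an alphabet A, and let a be a letter of A such that f(a) begins with the letter a and |f(a)| ≥ 2. Then the infinite fixed point f^ω(a) = lim_{n→∞} f^n(a) is an infinite 3-anti-power word, i.e., every finite factor of f^ω(a) is a 3-anti-power word. -/
/-- `u` is a (finite) factor of the infinite word `w : ℕ → A`. -/
def FactorOfInf {A : Type*} (u : List A) (w : ℕ → A) : Prop :=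
  ∃ i : ℕ, u = (List.range u.length).map (fun j => w (i + j))

/-- The iterated images `f^n(a)` of the letter `a` under the morphism `f`. -/
def iterImage {A : Type*} (f : A → List A) (a : A) : ℕ → List A
  | 0 => [a]
  | n + 1 => Morph.apply f (iterImage f a n)

lemma squareFree_infix {B : Type*} {v w : List B} (h : SquareFree w)
    (hv : v <:+: w) : SquareFree v :=
  fun u hu huu => h u hu (huu.trans hv)

lemma antiPowerWord3_infix {B : Type*} {v w : List B} (h : AntiPowerWord 3 w)
    (hv : v <:+: w) : AntiPowerWord 3 v := by
  obtain ⟨h2, h3⟩ := h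
  refine ⟨squareFree_infix h2 hv, ?_⟩
  intro ℓ h1 _ u hu hul
  have hwlen : u.length ≤ w.length := (hu.trans hv).length_le
  have hul' : u.length = 3 * ℓ := by simpa using hul
  have : ℓ ≤ w.length / 3 := by
    rw [Nat.le_div_iff_mul_le (by norm_num)]
    omega
  exact h3 ℓ h1 this u (hu.trans hv) hul

lemma antiPowerWord3_singleton {B : Type*} (a : B) : AntiPowerWord 3 [a] := by
  constructor
  · intro u hu huu
    have h1 : 1 ≤ u.length := List.length_pos_iff.mpr hu
    have := huu.length_le
    simp at this
    omega
  · intro ℓ h1 h2 u hu hul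
    simp at h2
    omega

lemma morph_len_ge {A : Type*} (f : A → List A) (hne : ∀ x : A, f x ≠ [])
    (t : List A) : t.length ≤ (Morph.apply f t).length := by
  induction t with
  | nil => simp [Morph.apply]
  | cons x t ih =>
    have : 1 ≤ (f x).length := List.length_pos_iff.mpr (hne x)
    simp only [Morph.apply, List.map_cons, List.flatten_cons, List.length_append,
      List.length_cons]
    simp only [Morph.apply] at ih
    omega

lemma iter_head {A : Type*} (f : A → List A) (a : A)
    (hhead : (f a).head? = some a) (n : ℕ) :
    (iterImage f a n).head? = some a := by
  induction n with
  | zero => rfl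
  | succ n ih =>
    obtain ⟨t, ht⟩ : ∃ t, iterImage f a n = a :: t := by
      cases h : iterImage f a n with
      | nil => rw [h] at ih; simp at ih
      | cons b t => rw [h] at ih; simp at ih; exact ⟨t, by rw [ih]⟩
    show (Morph.apply f (iterImage f a n)).head? = some a
    rw [ht]
    simp only [Morph.apply, List.map_cons, List.flatten_cons]
    rw [List.head?_append]
    rw [hhead]
    rfl

lemma iter_len {A : Type*} (f : A → List A) (hne : ∀ x : A, f x ≠ []) (a : A)
    (hhead : (f a).head? = some a) (hlen : 2 ≤ (f a).length) (n : ℕ) :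
    n + 1 ≤ (iterImage f a n).length := by
  induction n with
  | zero => simp [iterImage]
  | succ n ih =>
    obtain ⟨t, ht⟩ : ∃ t, iterImage f a n = a :: t := by
      have := iter_head f a hhead n
      cases h : iterImage f a n with
      | nil => rw [h] at this; simp at this
      | cons b t => rw [h] at this; simp at this; exact ⟨t, by rw [this]⟩
    have hlent : n ≤ t.length := by
      have := ih; rw [ht] at this; simp at this; omega
    have hmt := morph_len_ge f hne t
    show n + 1 + 1 ≤ (Morph.apply f (iterImage f a n)).length
    rw [ht]
    simp only [Morph.apply, List.map_cons, List.flatten_cons, List.length_append]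
    simp only [Morph.apply] at hmt
    omega

lemma iter_anti {A : Type*} (f : A → List A)
    (hap : ∀ v : List A, AntiPowerWord 3 v → AntiPowerWord 3 (Morph.apply f v))
    (a : A) (n : ℕ) : AntiPowerWord 3 (iterImage f a n) := by
  induction n with
  | zero => exact antiPowerWord3_singleton a
  | succ n ih => exact hap _ ih

/-- Let `f` be a non-erasing 3-anti-power morphism on `A` and
`a` a letter with `f a` beginning with `a` and `|f a| ≥ 2`. Then the infinite
fixed point `f^ω(a)` (the infinite word having every `f^n(a)` as a prefix) is an
infinite 3-anti-power word: every finite factor of it is a 3-anti-power word. -/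
theorem fixedPoint_infinite_antiPower
    {A : Type*} (f : A → List A) (hne : ∀ x : A, f x ≠ [])
    (hap : ∀ v : List A, AntiPowerWord 3 v → AntiPowerWord 3 (Morph.apply f v))
    (a : A) (hhead : (f a).head? = some a) (hlen : 2 ≤ (f a).length)
    (w : ℕ → A)
    (hw : ∀ n : ℕ,
      iterImage f a n = (List.range (iterImage f a n).length).map w) :
    ∀ u : List A, FactorOfInf u w → AntiPowerWord 3 u := by
  intro u ⟨i, hi⟩
  have hLlen : i + u.length + 1 ≤ (iterImage f a (i + u.length)).length :=
    iter_len f hne a hhead hlen (i + u.length)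
  have hinfix : u <:+: iterImage f a (i + u.length) := by
    have key : u = ((iterImage f a (i + u.length)).drop i).take u.length := by
      apply List.ext_getElem
      · simp only [List.length_take, List.length_drop]
        omega
      · intro j hj hj'
        have hjL : i + j < (iterImage f a (i + u.length)).length := by omega
        have h1 : u[j] = w (i + j) := by
          rw [List.getElem_of_eq hi hj]; simp
        have h2 : (iterImage f a (i + u.length))[i + j]'hjL = w (i + j) := by
          rw [List.getElem_of_eq (hw (i + u.length)) hjL]; simp
        simp only [List.getElem_take, List.getElem_drop]
        rw [h1]
        exact h2.symm
    have hinf0 : ((iterImage f a (i + u.length)).drop i).take u.length <:+: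
        iterImage f a (i + u.length) :=
      (((iterImage f a (i + u.length)).drop i).take_prefix u.length).isInfix.trans
        ((iterImage f a (i + u.length)).drop_suffix i).isInfix
    rw [← key] at hinf0
    exact hinf0
  exact antiPowerWord3_infix (iter_anti f hap a (i + u.length)) hinfix
end
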